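/- arXiv:1806.06223 — 7 statements merged into one kernel-verified Lean document; each statement's English description precedes it below -/
import Mathlib

section
/- For the Greater Than Mean problem, there exists a fixed priority algorithm reading at most ⌈log₂ n⌉ advice bits on inputs of length n that solves the problem optimally. Concretely: there exist an injective priority function P : ℚ × ℕ → ℝ under which items are presented in non-increasing order of their values, and a decision map D taking an advice value a ∈ {0,1,…,n−1} (representable with ⌈log₂ n⌉ bits), the list of previously presented items, and the current item to a Boolean answer, such that for every input of n items there exists an advice value a under which every answer of D is correct; the key fact is that when the values x₁ ≥ x₂ ≥ … ≥ xₙ are sorted in non-increasing order with mean m = (Σᵢ xᵢ)/n, there exists an index k such that xᵢ > m holds exactly for i < k. -/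
/-- An input item for Greater Than Mean: a value together with an identifier. -/
abbrev GTMItem := ℚ × ℕ

/-- The mean of the values of an input to Greater Than Mean. -/
def gtmMean (l : List GTMItem) : ℚ := (l.map Prod.fst).sum / l.length

/-- The correct answer for an item: `true` iff its value exceeds the mean of the input. -/
def gtmCorrect (l : List GTMItem) (x : GTMItem) : Bool := decide (gtmMean l < x.1)

/-! Ties in value are broken by the identifier: the priority of an item is the image of
`(value, id)` under an order embedding of the lexicographic order on `ℚ ×ₗ ℕ` into `ℝ`, which
exists because `ℚ ×ₗ ℕ` is a countable linear order. Under this priority the values arrive in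
non-increasing order, so the items above the mean form a prefix of the presentation, and that
prefix is proper since some value is at most the mean. The advice is the length `k < n` of the
prefix, and the algorithm answers `true` exactly for the first `k` items. -/

instance : Countable (ℚ ×ₗ ℕ) := Countable.of_equiv _ toLex

noncomputable def gtmPriority (x : GTMItem) : ℝ :=
  Classical.choice (Order.embedding_from_countable_to_dense (ℚ ×ₗ ℕ) ℝ) (toLex x)

theorem gtmPriority_injective : Function.Injective gtmPriority :=
  fun _ _ h => toLex.injective (RelEmbedding.injective _ h)

theorem fst_le_of_gtmPriority_lt {u v : GTMItem} (h : gtmPriority v < gtmPriority u) :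
    v.1 ≤ u.1 := by
  rcases Prod.Lex.lt_iff.mp ((OrderEmbedding.lt_iff_lt _).mp h) with h | h
  · exact h.le
  · exact h.1.le

theorem List.exists_get_iff_lt_of_pairwise {α : Type*} (p : α → Bool) :
    ∀ {l : List α}, l.Pairwise (fun u v => p v = true → p u = true) →
      ∃ k, ∀ i : Fin l.length, p (l.get i) = true ↔ (i : ℕ) < k
  | [], _ => ⟨0, fun i => i.elim0⟩
  | a :: t, hl => by
    rw [List.pairwise_cons] at hl
    obtain ⟨k, hk⟩ := List.exists_get_iff_lt_of_pairwise p hl.2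
    by_cases ha : p a = true
    · refine ⟨k + 1, fun ⟨i, hi⟩ => ?_⟩
      cases i with
      | zero => simpa using ha
      | succ j => simpa using hk ⟨j, by simpa using hi⟩
    · refine ⟨0, fun ⟨i, hi⟩ => ?_⟩
      cases i with
      | zero => simpa using ha
      | succ j =>
        simp only [Nat.not_lt_zero, iff_false]
        exact fun hpt => ha (hl.1 (t.get ⟨j, by simpa using hi⟩) (List.get_mem _ _) (by simpa using hpt))

theorem exists_not_gtmCorrect {l : List GTMItem} (hl : l ≠ []) :
    ∃ x ∈ l, gtmCorrect l x = false := by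
  have hlen : (l.length : ℚ) ≠ 0 := by simpa using hl
  obtain ⟨x, hx, hle⟩ := List.exists_le_of_sum_le hl Prod.fst (fun _ => gtmMean l) <| by
    rw [List.map_const', List.sum_replicate, nsmul_eq_mul, gtmMean, mul_div_cancel₀ _ hlen]
  exact ⟨x, hx, by simpa [gtmCorrect] using hle⟩

theorem exists_gtmCorrect_iff_lt {l : List GTMItem} (hl : l.Pairwise (fun u v => v.1 ≤ u.1)) :
    ∃ k, ∀ i : Fin l.length, gtmCorrect l (l.get i) = true ↔ (i : ℕ) < k :=
  List.exists_get_iff_lt_of_pairwise _ <| hl.imp fun hvu hv => by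
    simp only [gtmCorrect, decide_eq_true_eq] at hv ⊢
    exact hv.trans_le hvu

theorem exists_lt_length_gtmCorrect_iff_lt {l : List GTMItem} (hne : l ≠ [])
    (hl : l.Pairwise (fun u v => v.1 ≤ u.1)) :
    ∃ k < l.length, ∀ i : Fin l.length, gtmCorrect l (l.get i) = true ↔ (i : ℕ) < k := by
  obtain ⟨k, hk⟩ := exists_gtmCorrect_iff_lt hl
  obtain ⟨x, hx, hxf⟩ := exists_not_gtmCorrect hne
  obtain ⟨i, rfl⟩ := List.get_of_mem hx
  have hki : k ≤ i := not_lt.mp fun hik => by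
    have hxt := (hk i).mpr hik
    rw [hxf] at hxt
    contradiction
  exact ⟨k, hki.trans_lt i.2, hk⟩

/-- For Greater Than Mean there is a fixed priority algorithm reading at most
`⌈log₂ n⌉` advice bits (an advice value `a ∈ {0,…,n−1}`) that is optimal:
there are an injective priority function `P` under which items are presented in
non-increasing order of their values and a decision map `D` such that for every
input there is an advice value under which every answer is correct.  The key
fact: when the values are sorted in non-increasing order, there is an index `k`
such that an item's value exceeds the mean exactly for positions `i < k`. -/
theorem gtm_priority_log_advice_optimal :
    ∃ (P : GTMItem → ℝ) (D : ℕ → List GTMItem → GTMItem → Bool),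
      Function.Injective P ∧
      (∀ u v : GTMItem, P v < P u → v.1 ≤ u.1) ∧
      (∀ l : List GTMItem, l ≠ [] →
        (l.map Prod.snd).Nodup →
        l.Pairwise (fun u v => P v < P u) →
        ∃ a : ℕ, a < l.length ∧
          ∀ i : Fin l.length,
            D a (l.take (i : ℕ)) (l.get i) = gtmCorrect l (l.get i)) ∧
      (∀ l : List GTMItem, l ≠ [] →
        l.Pairwise (fun u v : GTMItem => v.1 ≤ u.1) →
        ∃ k : ℕ, ∀ i : Fin l.length,
          (gtmCorrect l (l.get i) = true ↔ (i : ℕ) < k)) := by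
  refine ⟨gtmPriority, fun a prev _ => decide (prev.length < a), gtmPriority_injective,
    fun _ _ => fst_le_of_gtmPriority_lt, fun l hne _ hP => ?_, fun l _ => exists_gtmCorrect_iff_lt⟩
  obtain ⟨k, hkl, hk⟩ :=
    exists_lt_length_gtmCorrect_iff_lt hne (hP.imp fst_le_of_gtmPriority_lt)
  refine ⟨k, hkl, fun i => ?_⟩
  dsimp only
  rw [List.length_take_of_le i.2.le, Bool.eq_iff_iff, hk i, decide_eq_true_iff]
end

section
/- For the Greater Than Mean problem, no fixed priority algorithm without advice can make fewer than (1/2 − ε)n mistakes for any ε ∈ (0, 1/2] on all inputs, for large enough n. Formally: for every injective priority function P : ℚ × ℕ → ℝ, every decision map D : List (ℚ × ℕ) → (ℚ × ℕ) → Bool, and every ε ∈ (0, 1/2], for all sufficiently large n there exists an input of n items (with pairwise distinct identifiers) such that, when the items are presented in decreasing order of P and the answer to each item is D applied to the list of earlier items and the current item, at least (1/2 − ε)n of the answers are incorrect. -/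
/-!
The adversary takes three classes of `m` items, with values `0`, `1` and `2`. The class whose
lowest-priority item has the highest priority lies entirely above the lowest item `a`, resp. `b`,
of each of the other two classes. The adversary presents this majority class together with `a`
or with `b`, plus one balancing item that makes the two means symmetric about the majority value.
Each majority item is then preceded by the same items in both inputs, so the algorithm answers it
the same way, while its correct answer differs between the two inputs. Hence one of these two
inputs of `m + 2` items forces at least `m / 2` mistakes.
-/

open Finset Function

section PriorityOrder

variable {α β : Type*} [LinearOrder β] {P : α → β}

theorem List.Pairwise.nodup_of_priority {l : List α} (hl : l.Pairwise fun u v => P v < P u) :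
    l.Nodup :=
  hl.imp fun h => ne_of_apply_ne P (ne_of_gt h)

theorem exists_pairwise_priority_toFinset_eq [DecidableEq α] (hP : Injective P) (s : Finset α) :
    ∃ l : List α, l.Pairwise (fun u v => P v < P u) ∧ l.toFinset = s := by
  refine Finset.induction_on_max_value P s ⟨[], List.Pairwise.nil, rfl⟩ ?_
  rintro a _ ha hmax ⟨l, hl, rfl⟩
  refine ⟨a :: l, List.pairwise_cons.2 ⟨fun x hx => ?_, hl⟩, List.toFinset_cons⟩
  have hxa : x ≠ a := by rintro rfl; exact ha (List.mem_toFinset.2 hx)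
  exact (hmax x (List.mem_toFinset.2 hx)).lt_of_ne (hP.ne hxa)

theorem List.Pairwise.take_eq_filter_priority {l : List α}
    (hl : l.Pairwise fun u v => P v < P u) {i : ℕ} (hi : i < l.length) :
    l.take i = l.filter fun y => P l[i] < P y := by
  have hsplit := List.take_append_drop i l
  rw [List.drop_eq_getElem_cons hi] at hsplit
  rw [← hsplit, List.pairwise_append, List.pairwise_cons] at hl
  obtain ⟨-, ⟨hafter, -⟩, hbefore⟩ := hl
  have hfilter : (l.take i ++ l[i] :: l.drop (i + 1)).filter (fun y => P l[i] < P y) =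
      l.take i := by
    rw [List.filter_append, List.filter_eq_self.2, List.filter_eq_nil_iff.2, List.append_nil]
    · intro y hy
      rcases List.mem_cons.1 hy with rfl | hy
      · simp
      · simpa using (hafter y hy).le
    · intro y hy
      simpa using hbefore y hy l[i] List.mem_cons_self
  rw [hsplit] at hfilter
  exact hfilter.symm

theorem filter_priority_eq_of_mem_iff {l₁ l₂ : List α}
    (h₁ : l₁.Pairwise fun u v => P v < P u) (h₂ : l₂.Pairwise fun u v => P v < P u) (t : β)
    (h : ∀ y, t < P y → (y ∈ l₁ ↔ y ∈ l₂)) :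
    l₁.filter (fun y => t < P y) = l₂.filter (fun y => t < P y) := by
  refine List.Perm.eq_of_pairwise (fun _ _ _ _ hab hba => (lt_asymm hab hba).elim)
    (h₁.filter _) (h₂.filter _) ?_
  rw [List.perm_ext_iff_of_nodup (h₁.nodup_of_priority.filter _) (h₂.nodup_of_priority.filter _)]
  intro y
  simp only [List.mem_filter, decide_eq_true_eq]
  exact ⟨fun ⟨hy, hty⟩ => ⟨(h y hty).1 hy, hty⟩, fun ⟨hy, hty⟩ => ⟨(h y hty).2 hy, hty⟩⟩

theorem card_toFinset_filter_le_card_filter_get [DecidableEq α] (l : List α) (Q : α → Prop)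
    [DecidablePred Q] :
    (l.toFinset.filter Q).card ≤ (univ.filter fun i : Fin l.length => Q (l.get i)).card := by
  refine (card_le_card (t := (univ.filter _).image l.get) fun x hx => ?_).trans card_image_le
  obtain ⟨hx, hQ⟩ := mem_filter.1 hx
  obtain ⟨i, rfl⟩ := List.mem_iff_get.1 (List.mem_toFinset.1 hx)
  exact mem_image_of_mem _ (mem_filter.2 ⟨mem_univ i, hQ⟩)

theorem exists_class_above_min_of_others {ι : Type*} (hP : Injective P) (K : Finset ι)
    (hK : K.Nonempty) (C : ι → Finset α) (hC : ∀ k ∈ K, (C k).Nonempty)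
    (hdisj : (K : Set ι).PairwiseDisjoint C) :
    ∃ r ∈ K, ∀ k ∈ K, k ≠ r → ∃ a ∈ C k, ∀ x ∈ C r, P a < P x := by
  have hmin : ∀ k ∈ K, ∃ a ∈ C k, ∀ x ∈ C k, P a ≤ P x := fun k hk =>
    (C k).exists_min_image P (hC k hk)
  obtain ⟨a₀, -⟩ := hC _ hK.choose_spec
  have : Nonempty α := ⟨a₀⟩
  choose! μ hμC hμ using hmin
  obtain ⟨r, hr, hrmax⟩ := K.exists_max_image (fun k => P (μ k)) hK
  refine ⟨r, hr, fun k hk hkr => ⟨μ k, hμC k hk, fun x hx => ?_⟩⟩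
  have hne : μ k ≠ x := fun h => disjoint_left.1 (hdisj hk hr hkr) (hμC k hk) (h ▸ hx)
  exact ((hrmax k hk).trans (hμ r hr x hx)).lt_of_ne (hP.ne hne)

end PriorityOrder

section Mistakes

variable {P : GTMItem → ℝ}

def gtmMistakes (D : List GTMItem → GTMItem → Bool) (l : List GTMItem) : ℕ :=
  (univ.filter fun i : Fin l.length =>
    D (l.take (i : ℕ)) (l.get i) ≠ gtmCorrect l (l.get i)).card

theorem card_filter_mistaken_le_gtmMistakes (D : List GTMItem → GTMItem → Bool)
    {l : List GTMItem} (hl : l.Pairwise fun u v => P v < P u) :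
    (l.toFinset.filter fun x =>
      D (l.filter fun y => P x < P y) x ≠ gtmCorrect l x).card ≤ gtmMistakes D l := by
  refine (card_toFinset_filter_le_card_filter_get l _).trans_eq ?_
  congr 1
  refine filter_congr fun i _ => ?_
  rw [List.get_eq_getElem, hl.take_eq_filter_priority i.2]

theorem card_le_gtmMistakes_add (D : List GTMItem → GTMItem → Bool) {l₁ l₂ : List GTMItem}
    (h₁ : l₁.Pairwise fun u v => P v < P u) (h₂ : l₂.Pairwise fun u v => P v < P u)
    {M : Finset GTMItem} (hM₁ : M ⊆ l₁.toFinset) (hM₂ : M ⊆ l₂.toFinset)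
    (hprefix : ∀ x ∈ M, l₁.filter (fun y => P x < P y) = l₂.filter (fun y => P x < P y))
    (hcorrect : ∀ x ∈ M, gtmCorrect l₁ x ≠ gtmCorrect l₂ x) :
    M.card ≤ gtmMistakes D l₁ + gtmMistakes D l₂ := by
  set Q₁ := fun x => D (l₁.filter fun y => P x < P y) x ≠ gtmCorrect l₁ x
  set Q₂ := fun x => D (l₂.filter fun y => P x < P y) x ≠ gtmCorrect l₂ x
  have hcover : M ⊆ M.filter Q₁ ∪ M.filter Q₂ := by
    intro x hx
    by_cases hQ₁ : Q₁ x
    · exact mem_union_left _ (mem_filter.2 ⟨hx, hQ₁⟩)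
    · refine mem_union_right _ (mem_filter.2 ⟨hx, ?_⟩)
      have hD : D (l₁.filter fun y => P x < P y) x = gtmCorrect l₁ x := not_not.1 hQ₁
      show D (l₂.filter fun y => P x < P y) x ≠ gtmCorrect l₂ x
      rw [← hprefix x hx, hD]
      exact hcorrect x hx
  calc M.card ≤ (M.filter Q₁ ∪ M.filter Q₂).card := card_le_card hcover
    _ ≤ (M.filter Q₁).card + (M.filter Q₂).card := card_union_le _ _
    _ ≤ gtmMistakes D l₁ + gtmMistakes D l₂ := add_le_add
        ((card_le_card (filter_subset_filter _ hM₁)).trans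
          (card_filter_mistaken_le_gtmMistakes D h₁))
        ((card_le_card (filter_subset_filter _ hM₂)).trans
          (card_filter_mistaken_le_gtmMistakes D h₂))

end Mistakes

theorem gtmMean_eq_of_nodup {l : List GTMItem} (hl : l.Nodup) :
    gtmMean l = (∑ x ∈ l.toFinset, x.1) / l.toFinset.card := by
  rw [gtmMean, List.sum_toFinset _ hl, List.toFinset_card_of_nodup hl]

theorem gtmCorrect_ne_of_gtmMean_add {l₁ l₂ : List GTMItem} {x : GTMItem}
    (hsum : gtmMean l₁ + gtmMean l₂ = 2 * x.1) (hne : gtmMean l₁ ≠ gtmMean l₂) :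
    gtmCorrect l₁ x ≠ gtmCorrect l₂ x := by
  unfold gtmCorrect
  rcases hne.lt_or_gt with h | h
  · rw [decide_eq_true (by linarith), decide_eq_false (by linarith)]; decide
  · rw [decide_eq_false (by linarith), decide_eq_true (by linarith)]; decide

-- Identifiers `3 * j + k` are distinct across classes and stay below `3 * m`, which leaves
-- `3 * m` free for the balancing item of `adversaryInput`.
def poolItem (k j : ℕ) : GTMItem := (k, 3 * j + k)

def poolClass (m k : ℕ) : Finset GTMItem := (range m).image (poolItem k)

theorem poolItem_injective (k : ℕ) : Injective (poolItem k) := fun j j' h => by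
  simpa [poolItem] using congrArg Prod.snd h

theorem card_poolClass (m k : ℕ) : (poolClass m k).card = m := by
  rw [poolClass, card_image_of_injective _ (poolItem_injective k), card_range]

theorem poolClass_nonempty {m : ℕ} (hm : 0 < m) (k : ℕ) : (poolClass m k).Nonempty :=
  (nonempty_range_iff.2 hm.ne').image _

theorem pairwise_disjoint_poolClass (m : ℕ) : Pairwise (Disjoint on poolClass m) := by
  intro k k' hkk'
  simp only [onFun, disjoint_left, poolClass, mem_image, not_exists, not_and]
  rintro _ ⟨j, -, rfl⟩ j' - h
  exact hkk' (by simpa [poolItem] using (congrArg Prod.fst h).symm)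

def adversaryInput (m r : ℕ) (w : ℚ) (t : GTMItem) : Finset GTMItem :=
  insert (w, 3 * m) (insert t (poolClass m r))

section AdversaryInput

variable {m r k j : ℕ}

theorem injOn_snd_adversaryInput (hr : r < 3) (hk : k < 3) (hj : j < m) (w : ℚ) :
    Set.InjOn Prod.snd (adversaryInput m r w (poolItem k j) : Set GTMItem) := by
  intro x hx y hy hxy
  simp only [adversaryInput, poolClass, coe_insert, coe_image, coe_range, Set.mem_insert_iff,
    Set.mem_image, Set.mem_Iio] at hx hy
  rcases hx with rfl | rfl | ⟨i, hi, rfl⟩ <;> rcases hy with rfl | rfl | ⟨i', hi', rfl⟩ <;>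
    simp [poolItem] at hxy ⊢ <;> omega

theorem poolItem_notMem_poolClass (hkr : k ≠ r) : poolItem k j ∉ poolClass m r := by
  simp [poolClass, poolItem, hkr.symm]

theorem fresh_notMem_insert_poolClass (hr : r < 3) (hk : k < 3) (hj : j < m) (w : ℚ) :
    (w, 3 * m) ∉ insert (poolItem k j) (poolClass m r) := by
  simp only [poolClass, poolItem, mem_insert, mem_image, mem_range, Prod.ext_iff, not_or,
    not_exists, not_and]
  exact ⟨fun _ => by omega, fun x hx _ => by omega⟩

theorem card_adversaryInput (hr : r < 3) (hk : k < 3) (hkr : k ≠ r) (hj : j < m) (w : ℚ) :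
    (adversaryInput m r w (poolItem k j)).card = m + 2 := by
  rw [adversaryInput, card_insert_of_notMem (fresh_notMem_insert_poolClass hr hk hj w),
    card_insert_of_notMem (poolItem_notMem_poolClass hkr), card_poolClass]

theorem sum_fst_adversaryInput (hr : r < 3) (hk : k < 3) (hkr : k ≠ r) (hj : j < m) (w : ℚ) :
    ∑ x ∈ adversaryInput m r w (poolItem k j), x.1 = w + k + m * r := by
  rw [adversaryInput, sum_insert (fresh_notMem_insert_poolClass hr hk hj w),
    sum_insert (poolItem_notMem_poolClass hkr), poolClass,
    sum_image fun _ _ _ _ h => poolItem_injective r h]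
  simp [poolItem, add_assoc]

end AdversaryInput

def IsPriorityInput (P : GTMItem → ℝ) (n : ℕ) (l : List GTMItem) : Prop :=
  l.length = n ∧ (l.map Prod.snd).Nodup ∧ l.Pairwise (fun u v => P v < P u)

section Adversary

variable {P : GTMItem → ℝ}

theorem exists_isPriorityInput_toFinset_eq (hP : Injective P) (s : Finset GTMItem)
    (hs : Set.InjOn Prod.snd (s : Set GTMItem)) :
    ∃ l, IsPriorityInput P s.card l ∧ l.toFinset = s := by
  obtain ⟨l, hl, rfl⟩ := exists_pairwise_priority_toFinset_eq hP s
  have hnd := hl.nodup_of_priority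
  refine ⟨l, ⟨(List.toFinset_card_of_nodup hnd).symm, ?_, hl⟩, rfl⟩
  exact hnd.map_on fun x hx y hy => hs (by simpa using hx) (by simpa using hy)

theorem exists_isPriorityInput_adversaryInput (hP : Injective P) {m r k j : ℕ} (hr : r < 3)
    (hk : k < 3) (hkr : k ≠ r) (hj : j < m) (w : ℚ) :
    ∃ l, IsPriorityInput P (m + 2) l ∧ l.toFinset = adversaryInput m r w (poolItem k j) ∧
      gtmMean l = (w + k + m * r) / (m + 2) := by
  obtain ⟨l, hl, hs⟩ := exists_isPriorityInput_toFinset_eq hP _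
    (injOn_snd_adversaryInput hr hk hj w)
  rw [card_adversaryInput hr hk hkr hj] at hl
  refine ⟨l, hl, hs, ?_⟩
  rw [gtmMean_eq_of_nodup hl.2.2.nodup_of_priority, hs, sum_fst_adversaryInput hr hk hkr hj,
    card_adversaryInput hr hk hkr hj]
  push_cast
  rfl

theorem exists_isPriorityInput_pair (hP : Injective P) (D : List GTMItem → GTMItem → Bool)
    {m : ℕ} (hm : 0 < m) :
    ∃ l₁ l₂, IsPriorityInput P (m + 2) l₁ ∧ IsPriorityInput P (m + 2) l₂ ∧
      m ≤ gtmMistakes D l₁ + gtmMistakes D l₂ := by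
  obtain ⟨r, hr, hbelow⟩ := exists_class_above_min_of_others hP (range 3) nonempty_range_add_one
    (poolClass m) (fun k _ => poolClass_nonempty hm k)
    ((pairwise_disjoint_poolClass m).set_pairwise _)
  rw [mem_range] at hr
  have hmin : ∀ k < 3, k ≠ r → ∃ j < m, ∀ x ∈ poolClass m r, P (poolItem k j) < P x := by
    intro k hk hkr
    obtain ⟨a, ha, haM⟩ := hbelow k (mem_range.2 hk) hkr
    obtain ⟨j, hj, rfl⟩ := mem_image.1 ha
    exact ⟨j, mem_range.1 hj, haM⟩
  obtain ⟨k₁, k₂, hk₁, hk₂, hk₁r, hk₂r, hk₁₂⟩ :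
      ∃ k₁ k₂, k₁ < 3 ∧ k₂ < 3 ∧ k₁ ≠ r ∧ k₂ ≠ r ∧ k₁ ≠ k₂ :=
    ⟨(r + 1) % 3, (r + 2) % 3, by omega, by omega, by omega, by omega, by omega⟩
  obtain ⟨j₁, hj₁, hbelow₁⟩ := hmin k₁ hk₁ hk₁r
  obtain ⟨j₂, hj₂, hbelow₂⟩ := hmin k₂ hk₂ hk₂r
  -- the balancing item makes the two means symmetric about the majority value `r`
  set w : ℚ := 2 * r - (k₁ + k₂) / 2
  obtain ⟨l₁, hl₁, hs₁, hmean₁⟩ := exists_isPriorityInput_adversaryInput hP hr hk₁ hk₁r hj₁ w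
  obtain ⟨l₂, hl₂, hs₂, hmean₂⟩ := exists_isPriorityInput_adversaryInput hP hr hk₂ hk₂r hj₂ w
  have hM : ∀ t, poolClass m r ⊆ adversaryInput m r w t := fun t =>
    (subset_insert _ _).trans (subset_insert _ _)
  refine ⟨l₁, l₂, hl₁, hl₂, ?_⟩
  calc m = (poolClass m r).card := (card_poolClass m r).symm
    _ ≤ _ := card_le_gtmMistakes_add D hl₁.2.2 hl₂.2.2 (hs₁ ▸ hM _) (hs₂ ▸ hM _) ?_ ?_
  · intro x hx
    refine filter_priority_eq_of_mem_iff hl₁.2.2 hl₂.2.2 (P x) fun y hy => ?_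
    have hy₁ : y ≠ poolItem k₁ j₁ := fun h => ((hbelow₁ x hx).trans hy).ne' (congrArg P h)
    have hy₂ : y ≠ poolItem k₂ j₂ := fun h => ((hbelow₂ x hx).trans hy).ne' (congrArg P h)
    rw [← List.mem_toFinset, hs₁, ← List.mem_toFinset, hs₂]
    simp only [adversaryInput, mem_insert, hy₁, hy₂, false_or]
  · intro x hx
    obtain ⟨j, -, rfl⟩ := mem_image.1 hx
    refine gtmCorrect_ne_of_gtmMean_add ?_ ?_ <;> rw [hmean₁, hmean₂]
    · simp only [poolItem, w]
      field_simp
      ring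
    · rw [Ne, div_left_inj' (by positivity)]
      intro h
      exact hk₁₂ (by exact_mod_cast (by linarith : (k₁ : ℚ) = k₂))

end Adversary

theorem exists_isPriorityInput_le_two_mul_gtmMistakes {P : GTMItem → ℝ} (hP : Injective P)
    (D : List GTMItem → GTMItem → Bool) {m : ℕ} (hm : 0 < m) :
    ∃ l, IsPriorityInput P (m + 2) l ∧ m ≤ 2 * gtmMistakes D l := by
  obtain ⟨l₁, l₂, hl₁, hl₂, hsum⟩ := exists_isPriorityInput_pair hP D hm
  rcases le_total (gtmMistakes D l₁) (gtmMistakes D l₂) with h | h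
  · exact ⟨l₂, hl₂, by omega⟩
  · exact ⟨l₁, hl₁, by omega⟩

theorem gtm_priority_no_advice_lower_bound_general
    (P : GTMItem → ℝ) (hP : Function.Injective P)
    (D : List GTMItem → GTMItem → Bool)
    (ε : ℝ) (hε0 : 0 < ε) :
    ∃ N : ℕ, ∀ n : ℕ, N ≤ n →
      ∃ l : List GTMItem,
        l.length = n ∧
        (l.map Prod.snd).Nodup ∧
        l.Pairwise (fun u v => P v < P u) ∧
        (1 / 2 - ε) * (n : ℝ) ≤
          ((Finset.univ.filter (fun i : Fin l.length =>
            D (l.take (i : ℕ)) (l.get i) ≠ gtmCorrect l (l.get i))).card : ℝ) := by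
  refine ⟨⌈ε⁻¹⌉₊ + 3, fun n hn => ?_⟩
  obtain ⟨m, rfl⟩ : ∃ m, n = m + 2 := ⟨n - 2, by omega⟩
  obtain ⟨l, ⟨hlen, hids, hsorted⟩, hmistakes⟩ :=
    exists_isPriorityInput_le_two_mul_gtmMistakes hP D (by omega : 0 < m)
  refine ⟨l, hlen, hids, hsorted, ?_⟩
  have hεn : 1 ≤ ((m + 2 : ℕ) : ℝ) * ε :=
    (inv_le_iff_one_le_mul₀ hε0).1 ((Nat.le_ceil _).trans (by exact_mod_cast (by omega)))
  have hhalf : (m : ℝ) ≤ 2 * gtmMistakes D l := by exact_mod_cast hmistakes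
  push_cast at hεn ⊢
  exact (by linarith : (1 / 2 - ε) * ((m : ℝ) + 2) ≤ gtmMistakes D l)

/-- For Greater Than Mean, no fixed priority algorithm without advice can make
fewer than `(1/2 − ε)n` mistakes on all inputs, for any `ε ∈ (0, 1/2]` and
large enough `n`: for every injective priority function `P` and decision map
`D` there is, for all sufficiently large `n`, an input of `n` items with
pairwise distinct identifiers, presented in decreasing order of `P`, on which
at least `(1/2 − ε)n` answers are incorrect. -/
theorem gtm_priority_no_advice_lower_bound
    (P : GTMItem → ℝ) (hP : Function.Injective P)
    (D : List GTMItem → GTMItem → Bool)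
    (ε : ℝ) (hε0 : 0 < ε) (hε1 : ε ≤ 1 / 2) :
    ∃ N : ℕ, ∀ n : ℕ, N ≤ n →
      ∃ l : List GTMItem,
        l.length = n ∧
        (l.map Prod.snd).Nodup ∧
        l.Pairwise (fun u v => P v < P u) ∧
        (1 / 2 - ε) * (n : ℝ) ≤
          ((Finset.univ.filter (fun i : Fin l.length =>
            D (l.take (i : ℕ)) (l.get i) ≠ gtmCorrect l (l.get i))).card : ℝ) :=
  gtm_priority_no_advice_lower_bound_general P hP D ε hε0
end

section
/- For Pair Matching, there exists a randomized online algorithm that in expectation answers correctly on at least 2n/3 input items on every input of length n. Formally: there exists a behavioral strategy p : List ℚ → ℚ → ℝ with 0 ≤ p h x ≤ 1 for all h, x (the probability of answering 'accept' on item x after seeing history h) such that for every input x₁,…,xₙ of pairwise distinct rationals in [0,1], the expected number of correct answers Σᵢ qᵢ is at least 2n/3, where qᵢ = p [x₁,…,x_{i−1}] x_i if the correct answer for x_i is 'accept' and qᵢ = 1 − p [x₁,…,x_{i−1}] x_i otherwise. Concretely the strategy that accepts with probability 1 when a previous item x_j satisfies x_i + x_j = 1 and otherwise rejects with probability 2/3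 achieves expected number of correct answers exactly (2/3)n. -/
/-!
Pair each item with its match `1 - xᵢ`, which is unique since the items are distinct; this
pairing is an involution on the indices. Under the strategy an unmatched item scores
`1 - 1/3 = 2/3`, while a matched pair scores `1/3` on its first item and `1` on its second,
so every orbit of the involution averages `2/3` per item.
-/

/-- The correct answer for item `i` of a Pair Matching input: `true` ('accept')
iff some other item of the input has matching value `1 − xᵢ`. -/
def pmCorrect (l : List ℚ) (i : Fin l.length) : Bool :=
  decide (∃ j : Fin l.length, j ≠ i ∧ l.get i + l.get j = 1)

theorem Fintype.sum_eq_card_nsmul_of_add_involutive {ι M : Type*} [Fintype ι]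
    [AddCommMonoid M] [IsAddTorsionFree M] {σ : ι → ι} (hσ : Function.Involutive σ)
    {f : ι → M} {c : M} (h : ∀ i, f i + f (σ i) = c + c) :
    ∑ i, f i = Fintype.card ι • c := by
  apply IsAddTorsionFree.nsmul_right_injective two_ne_zero
  calc 2 • ∑ i, f i = ∑ i, (f i + f (σ i)) := by
        rw [two_nsmul, Finset.sum_add_distrib, ← Equiv.sum_comp (hσ.toPerm σ) f]
        rfl
    _ = 2 • (Fintype.card ι • c) := by
        simp only [h, Finset.sum_add_distrib, Finset.sum_const, Finset.card_univ, two_nsmul]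

theorem List.exists_mem_take_iff {α : Type*} (l : List α) (n : ℕ) (P : α → Prop) :
    (∃ y ∈ l.take n, P y) ↔ ∃ j : Fin l.length, (j : ℕ) < n ∧ P (l.get j) := by
  simp only [List.mem_take_iff_getElem]
  constructor
  · rintro ⟨_, ⟨j, hj, rfl⟩, hP⟩
    exact ⟨⟨j, lt_of_lt_of_le hj (min_le_right _ _)⟩, lt_of_lt_of_le hj (min_le_left _ _), hP⟩
  · rintro ⟨j, hj, hP⟩
    exact ⟨_, ⟨j, lt_min hj j.isLt, rfl⟩, hP⟩

noncomputable def pmStrategy (h : List ℚ) (x : ℚ) : ℝ :=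
  if ∃ y ∈ h, x + y = 1 then 1 else 1 / 3

noncomputable def pmScore (p : List ℚ → ℚ → ℝ) (l : List ℚ) (i : Fin l.length) : ℝ :=
  if pmCorrect l i then p (l.take i) (l.get i) else 1 - p (l.take i) (l.get i)

open Classical in
/-- An item `1/2` is its own partner, so for distinct items `pmPartner l i ≠ i` is exactly
`pmCorrect l i`. -/
noncomputable def pmPartner (l : List ℚ) (i : Fin l.length) : Fin l.length :=
  if h : ∃ j, l.get i + l.get j = 1 then h.choose else i

theorem add_get_pmPartner {l : List ℚ} {i : Fin l.length} (h : pmPartner l i ≠ i) :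
    l.get i + l.get (pmPartner l i) = 1 := by
  by_cases hex : ∃ j, l.get i + l.get j = 1
  · rw [pmPartner, dif_pos hex]
    exact hex.choose_spec
  · exact absurd (dif_neg hex) h

section Partner

variable {l : List ℚ} (hl : l.Nodup)
include hl

theorem pmPartner_eq_of_add_eq_one {i j : Fin l.length} (h : l.get i + l.get j = 1) :
    pmPartner l i = j := by
  have hex : ∃ j, l.get i + l.get j = 1 := ⟨j, h⟩
  rw [pmPartner, dif_pos hex]
  apply List.nodup_iff_injective_get.mp hl
  linarith [hex.choose_spec]

theorem pmPartner_involutive : Function.Involutive (pmPartner l) := by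
  intro i
  by_cases hex : ∃ j, l.get i + l.get j = 1
  · obtain ⟨j, hj⟩ := hex
    rw [pmPartner_eq_of_add_eq_one hl hj,
      pmPartner_eq_of_add_eq_one hl (by linarith : l.get j + l.get i = 1)]
  · have hi : pmPartner l i = i := dif_neg hex
    rw [hi, hi]

theorem pmCorrect_iff_pmPartner_ne (i : Fin l.length) :
    pmCorrect l i = true ↔ pmPartner l i ≠ i := by
  rw [pmCorrect, decide_eq_true_iff]
  constructor
  · rintro ⟨j, hji, hj⟩
    rwa [pmPartner_eq_of_add_eq_one hl hj]
  · intro hne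
    exact ⟨pmPartner l i, hne, add_get_pmPartner hne⟩

theorem exists_mem_take_add_eq_one_iff (i : Fin l.length) :
    (∃ y ∈ l.take i, l.get i + y = 1) ↔ pmPartner l i < i := by
  rw [List.exists_mem_take_iff]
  constructor
  · rintro ⟨j, hji, hj⟩
    rwa [pmPartner_eq_of_add_eq_one hl hj]
  · intro hlt
    exact ⟨pmPartner l i, hlt, add_get_pmPartner hlt.ne⟩

theorem pmScore_pmStrategy (i : Fin l.length) :
    pmScore pmStrategy l i =
      if pmPartner l i < i then 1 else if i < pmPartner l i then 1 / 3 else 2 / 3 := by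
  simp only [pmScore, pmStrategy, pmCorrect_iff_pmPartner_ne hl,
    exists_mem_take_add_eq_one_iff hl]
  rcases lt_trichotomy (pmPartner l i) i with h | h | h
  · simp [h, h.ne]
  · norm_num [h]
  · simp [h, h.ne', lt_asymm h]

theorem sum_pmScore_pmStrategy : ∑ i, pmScore pmStrategy l i = 2 * (l.length : ℝ) / 3 := by
  rw [Fintype.sum_eq_card_nsmul_of_add_involutive (pmPartner_involutive hl) (c := (2 / 3 : ℝ))]
  · rw [Fintype.card_fin, nsmul_eq_mul]
    ring
  intro i
  rw [pmScore_pmStrategy hl, pmScore_pmStrategy hl, pmPartner_involutive hl]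
  rcases lt_trichotomy (pmPartner l i) i with h | h | h
  · norm_num [h, lt_asymm h]
  · norm_num [h]
  · norm_num [h, lt_asymm h]

end Partner

/-- For Pair Matching there is a randomized online algorithm (in behavioral
form, `p h x` being the probability of accepting `x` after history `h`) whose
expected number of correct answers is at least `2n/3` on every input of
pairwise distinct rationals in `[0,1]`; concretely, the strategy accepting with
probability `1` when a previous item matches and otherwise accepting with
probability `1/3` (i.e., rejecting with probability `2/3`) achieves expected
number of correct answers exactly `(2/3)n`. -/
theorem pm_online_randomized_upper_bound :
    ∃ p : List ℚ → ℚ → ℝ,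
      (∀ h x, 0 ≤ p h x ∧ p h x ≤ 1) ∧
      (∀ h x, p h x = if ∃ y ∈ h, x + y = 1 then 1 else 1 / 3) ∧
      ∀ l : List ℚ, l.Nodup → (∀ x ∈ l, 0 ≤ x ∧ x ≤ 1) →
        2 * (l.length : ℝ) / 3 ≤
          (∑ i : Fin l.length,
            (if pmCorrect l i then p (l.take (i : ℕ)) (l.get i)
             else 1 - p (l.take (i : ℕ)) (l.get i))) ∧
        (∑ i : Fin l.length,
            (if pmCorrect l i then p (l.take (i : ℕ)) (l.get i)
             else 1 - p (l.take (i : ℕ)) (l.get i))) = 2 * (l.length : ℝ) / 3 := by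
  refine ⟨pmStrategy, fun h x => ?_, fun _ _ => rfl, fun l hl _ => ?_⟩
  · unfold pmStrategy
    split_ifs <;> norm_num
  · have hsum := sum_pmScore_pmStrategy hl
    exact ⟨hsum.ge, hsum⟩
end

section
/- For Pair Matching, no randomized online algorithm can achieve a competitive ratio less than 3/2. Formally: for every behavioral strategy p : List ℚ → ℚ → ℝ with values in [0,1] and every N ∈ ℕ, there exists an input x₁,…,xₙ of pairwise distinct rationals in [0,1] with n ≥ N such that the expected number of correct answers Σᵢ qᵢ is at most 2n/3, where qᵢ = p [x₁,…,x_{i−1}] x_i if the correct answer for x_i is 'accept' and qᵢ = 1 − p [x₁,…,x_{i−1}] x_i otherwise (while the optimum is n). -/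
/-! The adversary presents fresh values `x` that match nothing seen so far. If the algorithm
accepts `x` with probability at least `1/3`, then `x` stays unmatched and is answered correctly
with probability at most `2/3`; otherwise `1 - x` follows at once, and the pair `x, 1 - x` earns at
most `1/3 + 1` correct answers in expectation. Taking the fresh values decreasing in `(0, 1/2)`
keeps each new value and its partner away from all earlier items. -/

theorem Fin.sum_univ_list_append {α M : Type*} [AddCommMonoid M] (l t : List α)
    (f : Fin (l ++ t).length → M) :
    ∑ i, f i = ∑ i : Fin l.length, f ⟨i, by simp; omega⟩ +
      ∑ i : Fin t.length, f ⟨l.length + i, by simp⟩ := by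
  rw [← Fin.sum_congr' f List.length_append.symm, Fin.sum_univ_add]
  rfl

theorem pmCorrect_iff_mem_eraseIdx (l : List ℚ) (i : Fin l.length) :
    pmCorrect l i ↔ 1 - l[i] ∈ l.eraseIdx i := by
  simp only [pmCorrect, decide_eq_true_eq, List.mem_eraseIdx_iff_getElem, List.get_eq_getElem,
    Fin.getElem_fin]
  constructor
  · rintro ⟨j, hji, hj⟩
    exact ⟨j, j.isLt, Fin.val_ne_of_ne hji, by linarith⟩
  · rintro ⟨j, hj, hji, hsum⟩
    exact ⟨⟨j, hj⟩, Fin.ne_of_val_ne hji, by linarith⟩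

noncomputable def expectedCorrect (p : List ℚ → ℚ → ℝ) (l : List ℚ) : ℝ :=
  ∑ i : Fin l.length,
    (if pmCorrect l i then p (l.take (i : ℕ)) (l.get i) else 1 - p (l.take (i : ℕ)) (l.get i))

theorem expectedCorrect_append (p : List ℚ → ℚ → ℝ) {l t : List ℚ} (h : ∀ y ∈ l, 1 - y ∉ t) :
    expectedCorrect p (l ++ t) = expectedCorrect p l +
      ∑ i : Fin t.length, if 1 - t[i] ∈ (l ++ t).eraseIdx (l.length + i)
        then p (l ++ t.take i) t[i] else 1 - p (l ++ t.take i) t[i] := by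
  rw [expectedCorrect, Fin.sum_univ_list_append]
  congr 1
  · refine Finset.sum_congr rfl fun i _ => ?_
    have hi : (i : ℕ) < l.length := i.isLt
    simp only [pmCorrect_iff_mem_eraseIdx, List.get_eq_getElem, Fin.getElem_fin,
      List.getElem_append_left hi, List.eraseIdx_append_of_lt_length hi, List.mem_append,
      List.take_append_of_le_length hi.le, h _ (List.getElem_mem hi), or_false]
  · refine Finset.sum_congr rfl fun i _ => ?_
    simp only [pmCorrect_iff_mem_eraseIdx, List.get_eq_getElem, Fin.getElem_fin,
      List.getElem_append_right (Nat.le_add_right _ _), Nat.add_sub_cancel_left,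
      List.take_length_add_append]

theorem expectedCorrect_append_singleton (p : List ℚ → ℚ → ℝ) {l : List ℚ} {x : ℚ}
    (hx : 1 - x ∉ l) :
    expectedCorrect p (l ++ [x]) = expectedCorrect p l + (1 - p l x) := by
  rw [expectedCorrect_append p fun y hy hyx => hx (by
    obtain rfl := List.mem_singleton.mp hyx
    simpa using hy)]
  simp [List.eraseIdx_append_of_length_le, hx]

theorem expectedCorrect_append_pair (p : List ℚ → ℚ → ℝ) {l : List ℚ} {x : ℚ}
    (hx : x ∉ l) (hx' : 1 - x ∉ l) :
    expectedCorrect p (l ++ [x, 1 - x]) = expectedCorrect p l + p l x + p (l ++ [x]) (1 - x) := by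
  rw [expectedCorrect_append p fun y hy hyx => ?_]
  · simp [Fin.sum_univ_succ, List.eraseIdx_append_of_length_le, add_assoc]
  · rcases List.mem_pair.mp hyx with rfl | h
    · exact hx' (by simpa using hy)
    · exact hx (by rwa [sub_right_inj.mp h] at hy)

theorem exists_extension_expectedCorrect_le (p : List ℚ → ℚ → ℝ) (hp : ∀ h x, p h x ≤ 1)
    {l : List ℚ} {x : ℚ} (hx : x ∉ l) (hx' : 1 - x ∉ l) :
    ∃ t, (t = [x] ∨ t = [x, 1 - x]) ∧
      expectedCorrect p (l ++ t) ≤ expectedCorrect p l + 2 * t.length / 3 := by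
  by_cases hq : 1 / 3 ≤ p l x
  · refine ⟨[x], Or.inl rfl, ?_⟩
    rw [expectedCorrect_append_singleton p hx']
    push_cast [List.length_singleton]
    linarith
  · refine ⟨[x, 1 - x], Or.inr rfl, ?_⟩
    rw [expectedCorrect_append_pair p hx hx']
    push_cast [List.length_cons, List.length_nil]
    linarith [hp (l ++ [x]) (1 - x)]

theorem exists_nodup_expectedCorrect_le (p : List ℚ → ℚ → ℝ) (hp : ∀ h x, p h x ≤ 1) (m : ℕ)
    {ε : ℚ} (hε : ε < 1 / 2) :
    ∃ l : List ℚ, l.Nodup ∧ (∀ y ∈ l, ε < y ∧ y < 1 - ε) ∧ m ≤ l.length ∧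
      expectedCorrect p l ≤ 2 * l.length / 3 := by
  induction m generalizing ε with
  | zero => exact ⟨[], List.nodup_nil, by simp, le_rfl, by simp [expectedCorrect]⟩
  | succ m ih =>
    obtain ⟨x, hεx, hx_half⟩ := exists_between hε
    obtain ⟨l, hnd, hl, hlen, hsum⟩ := ih hx_half
    have hx : x ∉ l := fun h => (hl x h).1.false
    have hx' : 1 - x ∉ l := fun h => (hl _ h).2.false
    obtain ⟨t, ht, hsum_t⟩ := exists_extension_expectedCorrect_le p hp hx hx'
    have ht_mem : ∀ z ∈ t, z = x ∨ z = 1 - x := by rcases ht with rfl | rfl <;> simp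
    have ht_nodup : t.Nodup := by
      rcases ht with rfl | rfl
      exacts [List.nodup_singleton x, by simpa using (by linarith : x ≠ 1 - x)]
    have ht_length : 1 ≤ t.length := by rcases ht with rfl | rfl <;> simp
    refine ⟨l ++ t, List.nodup_append.mpr ⟨hnd, ht_nodup, ?_⟩, fun y hy => ?_, ?_, ?_⟩
    · rintro a ha b hb rfl
      rcases ht_mem a hb with rfl | rfl
      exacts [hx ha, hx' ha]
    · rcases List.mem_append.mp hy with hy | hy
      · have := hl y hy
        constructor <;> linarith
      · rcases ht_mem y hy with rfl | rfl <;> constructor <;> linarith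
    · rw [List.length_append]
      omega
    · rw [List.length_append]
      push_cast
      linarith

/-- For Pair Matching, no randomized online algorithm (in behavioral form)
achieves a competitive ratio less than `3/2`: for every strategy `p` with
values in `[0,1]` and every `N` there is an input of pairwise distinct
rationals in `[0,1]` of length `n ≥ N` on which the expected number of correct
answers is at most `2n/3` (while the optimum is `n`). -/
theorem pm_online_randomized_lower_bound
    (p : List ℚ → ℚ → ℝ) (hp : ∀ h x, 0 ≤ p h x ∧ p h x ≤ 1) (N : ℕ) :
    ∃ l : List ℚ,
      l.Nodup ∧ (∀ x ∈ l, 0 ≤ x ∧ x ≤ 1) ∧ N ≤ l.length ∧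
      (∑ i : Fin l.length,
        (if pmCorrect l i then p (l.take (i : ℕ)) (l.get i)
         else 1 - p (l.take (i : ℕ)) (l.get i))) ≤ 2 * (l.length : ℝ) / 3 := by
  obtain ⟨l, hnd, hl, hlen, hsum⟩ :=
    exists_nodup_expectedCorrect_le p (fun h x => (hp h x).2) N (ε := 0) (by norm_num)
  exact ⟨l, hnd, fun x hx => ⟨(hl x hx).1.le, by linarith [(hl x hx).2]⟩, hlen, hsum⟩
end

section
/- For Pair Matching, no deterministic online algorithm reading fewer than (1 − H(ε))n/2 advice bits can make fewer than εn mistakes, for any ε ∈ (0, 1/2] and large enough n. Formally: for every ε ∈ (0, 1/2], every b ∈ ℕ, and every map A : Fin (2^b) → List ℚ → ℚ → Bool, for all sufficiently large m, if b < (1 − H(ε))m then there exists a Pair Matching input of length N ≤ 2m (pairwise distinct rationals in [0,1]) such that for every advice value a ∈ Fin (2^b), the number of incorrect answers of A under advice a is at least εm (hence at least εN/2). -/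
/-- The binary entropy function `H(p) = −p·log₂ p − (1−p)·log₂(1−p)`. -/
noncomputable def binEnt (p : ℝ) : ℝ :=
  -(p * Real.logb 2 p) - (1 - p) * Real.logb 2 (1 - p)

/-!
Feed the algorithm `m` values `xᵢ < 1/2`, followed by the partners `1 - xᵢ` of a set `T` of them.
While reading the first `m` values it has seen no partner, so under advice `a` its answers there
form a word `sₐ ∈ {0,1}ᵐ` independent of `T`, and it errs at `xᵢ` exactly when `sₐ i ≠ [i ∈ T]`.
For `ε ≤ 1/2` a Hamming ball of radius `εm` has at most `2^(H(ε)m)` points, since under the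
weights `ε^k (1-ε)^(m-k)` (of total mass one) each of its points weighs at least `2^(-H(ε)m)`.
So if `b + H(ε)m < m`, the `2ᵇ` balls around the words `sₐ` miss some `T`.
-/

open Finset

lemma two_rpow_neg_binEnt_mul_le {ε : ℝ} (hε0 : 0 < ε) (hε1 : ε ≤ 1 / 2) {n k : ℕ}
    (hk : k ≤ ε * n) : (2 : ℝ) ^ (-(binEnt ε * n)) ≤ ε ^ k * (1 - ε) ^ (n - k) := by
  have h1ε : 0 < 1 - ε := by linarith
  have hkn : k ≤ n := by
    have : (k : ℝ) ≤ n := hk.trans (by nlinarith [(Nat.cast_nonneg n : (0 : ℝ) ≤ n)])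
    exact_mod_cast this
  have hlog : Real.log ε ≤ Real.log (1 - ε) := Real.log_le_log hε0 (by linarith)
  rw [← Real.log_le_log_iff (by positivity) (by positivity), Real.log_rpow two_pos,
    Real.log_mul (by positivity) (by positivity), Real.log_pow, Real.log_pow,
    Nat.cast_sub hkn, binEnt, Real.logb, Real.logb]
  have hlog2 : Real.log 2 ≠ 0 := by positivity
  field_simp
  nlinarith [mul_nonneg_of_nonpos_of_nonpos (sub_nonpos.2 hk) (sub_nonpos.2 hlog)]

theorem card_filter_powerset_card_le {α : Type*} [DecidableEq α] {ε : ℝ} (hε0 : 0 < ε)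
    (hε1 : ε ≤ 1 / 2) (s : Finset α) :
    (#{t ∈ s.powerset | (#t : ℝ) ≤ ε * #s} : ℝ) ≤ 2 ^ (binEnt ε * #s) := by
  have h1ε : 0 < 1 - ε := by linarith
  have hmass : (2 : ℝ) ^ (-(binEnt ε * #s)) * #{t ∈ s.powerset | (#t : ℝ) ≤ ε * #s} ≤ 1 :=
    calc (2 : ℝ) ^ (-(binEnt ε * #s)) * #{t ∈ s.powerset | (#t : ℝ) ≤ ε * #s}
        = ∑ t ∈ s.powerset with (#t : ℝ) ≤ ε * #s, (2 : ℝ) ^ (-(binEnt ε * #s)) := by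
          rw [sum_const, nsmul_eq_mul, mul_comm]
      _ ≤ ∑ t ∈ s.powerset with (#t : ℝ) ≤ ε * #s, ε ^ #t * (1 - ε) ^ #(s \ t) := by
        refine sum_le_sum fun t ht => ?_
        rw [mem_filter, mem_powerset] at ht
        rw [card_sdiff_of_subset ht.1]
        exact two_rpow_neg_binEnt_mul_le hε0 hε1 ht.2
      _ ≤ ∑ t ∈ s.powerset, ε ^ #t * (1 - ε) ^ #(s \ t) :=
        sum_le_sum_of_subset_of_nonneg (filter_subset _ _) fun t _ _ => by positivity
      _ = ∏ _i ∈ s, (ε + (1 - ε)) := by simp only [prod_add, prod_const]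
      _ = 1 := by simp
  rwa [Real.rpow_neg zero_le_two, inv_mul_le_iff₀ (by positivity), mul_one] at hmass

theorem card_filter_hammingDist_le {ι : Type*} [Fintype ι] [DecidableEq ι] {ε : ℝ}
    (hε0 : 0 < ε) (hε1 : ε ≤ 1 / 2) (x : ι → Bool) :
    (#{y | (hammingDist x y : ℝ) ≤ ε * Fintype.card ι} : ℝ) ≤
      2 ^ (binEnt ε * Fintype.card ι) := by
  have hinj : Set.InjOn (fun y : ι → Bool => ({i | x i ≠ y i} : Finset ι)) Set.univ := by
    intro y _ z _ hyz
    funext i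
    have := congrArg (i ∈ ·) hyz
    simp only [mem_filter, mem_univ, true_and, eq_iff_iff] at this
    cases hx : x i <;> cases hy : y i <;> cases hz : z i <;> simp_all
  refine le_trans ?_ (card_filter_powerset_card_le hε0 hε1 (univ : Finset ι))
  rw [card_univ]
  exact_mod_cast card_le_card_of_injOn _ (fun y hy => by simpa [hammingDist] using hy)
    (hinj.mono (Set.subset_univ _))

theorem exists_forall_le_hammingDist {ι κ : Type*} [Fintype ι] [DecidableEq ι] [Fintype κ]
    {ε : ℝ} (hε0 : 0 < ε) (hε1 : ε ≤ 1 / 2) (s : κ → ι → Bool)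
    (hcard : (Fintype.card κ : ℝ) * 2 ^ (binEnt ε * Fintype.card ι) < 2 ^ Fintype.card ι) :
    ∃ y : ι → Bool, ∀ k, ε * Fintype.card ι ≤ hammingDist (s k) y := by
  by_contra! hnear
  have hcover : (univ : Finset (ι → Bool)) ⊆
      univ.biUnion fun k => {y | (hammingDist (s k) y : ℝ) ≤ ε * Fintype.card ι} := by
    intro y _
    obtain ⟨k, hk⟩ := hnear y
    exact mem_biUnion.2 ⟨k, mem_univ _, mem_filter.2 ⟨mem_univ _, hk.le⟩⟩
  have hcount := (card_le_card hcover).trans card_biUnion_le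
  refine hcard.not_ge ?_
  calc (2 : ℝ) ^ Fintype.card ι = #(univ : Finset (ι → Bool)) := by simp
    _ ≤ ∑ k, (#{y | (hammingDist (s k) y : ℝ) ≤ ε * Fintype.card ι} : ℝ) := by
      exact_mod_cast hcount
    _ ≤ ∑ _k : κ, (2 : ℝ) ^ (binEnt ε * Fintype.card ι) :=
      sum_le_sum fun k _ => card_filter_hammingDist_le hε0 hε1 (s k)
    _ = Fintype.card κ * 2 ^ (binEnt ε * Fintype.card ι) := by simp

theorem pmCorrect_eq_decide_mem {l : List ℚ} (i : Fin l.length) (hi : l.get i ≠ 1 / 2) :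
    pmCorrect l i = decide (1 - l.get i ∈ l) := by
  rw [pmCorrect, decide_eq_decide]
  constructor
  · rintro ⟨j, -, hj⟩
    rw [← eq_sub_iff_add_eq'.2 hj]
    exact List.get_mem l j
  · intro hmem
    obtain ⟨j, hj⟩ := List.mem_iff_get.1 hmem
    refine ⟨j, fun hji => hi ?_, by rw [hj]; ring⟩
    rw [hji] at hj
    linarith

def lowValue (m i : ℕ) : ℚ := (i + 1) / (2 * m + 2)

lemma lowValue_pos (m i : ℕ) : 0 < lowValue m i := by
  unfold lowValue; positivity

lemma lowValue_lt_half {m i : ℕ} (h : i < m) : lowValue m i < 1 / 2 := by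
  unfold lowValue
  rw [div_lt_div_iff₀ (by positivity) (by norm_num)]
  have : (i : ℚ) + 1 ≤ m := by exact_mod_cast h
  linarith

lemma lowValue_injective (m : ℕ) : Function.Injective (lowValue m) := by
  intro i j h
  unfold lowValue at h
  field_simp at h
  exact_mod_cast (by linarith : (i : ℚ) = j)

/-- The first `m` answers of an online algorithm on this input do not depend on `T`. -/
def hardInput (m : ℕ) (T : Fin m → Bool) : List ℚ :=
  (List.range m).map (lowValue m) ++
    ((List.finRange m).filter T).map (fun k : Fin m => 1 - lowValue m k)

section hardInput

variable {m : ℕ} (T : Fin m → Bool)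

lemma length_hardInput_le : (hardInput m T).length ≤ 2 * m := by
  simpa [hardInput, two_mul] using List.length_filter_le T (List.finRange m)

lemma le_length_hardInput : m ≤ (hardInput m T).length := by
  simp [hardInput]

lemma mem_Icc_of_mem_hardInput {q : ℚ} (hq : q ∈ hardInput m T) : 0 ≤ q ∧ q ≤ 1 := by
  simp only [hardInput, List.mem_append, List.mem_map, List.mem_range, List.mem_filter,
    List.mem_finRange, true_and] at hq
  rcases hq with ⟨i, hi, rfl⟩ | ⟨k, -, rfl⟩
  · have := lowValue_lt_half hi
    exact ⟨(lowValue_pos m i).le, by linarith⟩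
  · have := lowValue_lt_half k.isLt
    exact ⟨by linarith, by linarith [lowValue_pos m k]⟩

lemma nodup_hardInput : (hardInput m T).Nodup := by
  refine List.Nodup.append (List.nodup_range.map (lowValue_injective m))
    ((List.nodup_finRange m).filter _ |>.map fun k k' h =>
      Fin.ext (lowValue_injective m (by simpa using h))) ?_
  simp only [List.disjoint_left, List.mem_map, List.mem_range, List.mem_filter,
    List.mem_finRange, true_and]
  rintro _ ⟨i, hi, rfl⟩ ⟨k, -, hk⟩
  linarith [lowValue_lt_half hi, lowValue_lt_half k.isLt]

lemma take_hardInput {i : ℕ} (hi : i ≤ m) :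
    (hardInput m T).take i = (List.range i).map (lowValue m) := by
  rw [hardInput, List.take_append_of_le_length (by simpa using hi), ← List.map_take,
    List.take_range, min_eq_left hi]

lemma get_hardInput (k : Fin m) :
    (hardInput m T).get (k.castLE (le_length_hardInput T)) = lowValue m k := by
  have hk : (k : ℕ) < ((List.range m).map (lowValue m)).length := by simp
  simp only [List.get_eq_getElem, Fin.val_castLE]
  simp only [hardInput]
  rw [List.getElem_append_left hk, List.getElem_map, List.getElem_range]

lemma one_sub_lowValue_mem_hardInput_iff (k : Fin m) :
    1 - lowValue m k ∈ hardInput m T ↔ T k := by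
  simp only [hardInput, List.mem_append, List.mem_map, List.mem_range, List.mem_filter,
    List.mem_finRange, true_and]
  constructor
  · rintro (⟨i, hi, h⟩ | ⟨k', hk', h⟩)
    · linarith [lowValue_lt_half hi, lowValue_lt_half k.isLt]
    · rwa [← Fin.ext (lowValue_injective m (by linarith : lowValue m k' = lowValue m k))]
  · exact fun hk => Or.inr ⟨k, hk, rfl⟩

lemma pmCorrect_hardInput (k : Fin m) :
    pmCorrect (hardInput m T) (k.castLE (le_length_hardInput T)) = T k := by
  rw [pmCorrect_eq_decide_mem _ (by rw [get_hardInput]; exact (lowValue_lt_half k.isLt).ne),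
    get_hardInput]
  simp only [one_sub_lowValue_mem_hardInput_iff, Bool.decide_eq_true]

end hardInput

def mistakes (B : List ℚ → ℚ → Bool) (l : List ℚ) : ℕ :=
  #{i : Fin l.length | B (l.take i) (l.get i) ≠ pmCorrect l i}

lemma hammingDist_le_mistakes {m : ℕ} (B : List ℚ → ℚ → Bool) (T : Fin m → Bool) :
    hammingDist (fun k : Fin m => B ((List.range k).map (lowValue m)) (lowValue m k)) T ≤
      mistakes B (hardInput m T) := by
  refine card_le_card_of_injOn (Fin.castLE (le_length_hardInput T)) (fun k hk => ?_)
    (Fin.castLE_injective _).injOn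
  simp only [coe_filter, mem_univ, true_and, Set.mem_ofPred_eq] at hk ⊢
  rwa [Fin.val_castLE, take_hardInput T k.isLt.le, get_hardInput, pmCorrect_hardInput]

/-- For Pair Matching, no deterministic online algorithm reading fewer than
`(1 − H(ε))n/2` advice bits can make fewer than `εn` mistakes, for any
`ε ∈ (0, 1/2]` and large enough `n`: for all sufficiently large `m`, if
`b < (1 − H(ε))·m`, there is an input of length `N ≤ 2m` of pairwise distinct
rationals in `[0,1]` on which, for every advice value, the algorithm makes at
least `εm` (hence at least `εN/2`) mistakes. -/
theorem pm_online_advice_lower_bound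
    (ε : ℝ) (hε0 : 0 < ε) (hε1 : ε ≤ 1 / 2) (b : ℕ)
    (A : Fin (2 ^ b) → List ℚ → ℚ → Bool) :
    ∃ M : ℕ, ∀ m : ℕ, M ≤ m →
      (b : ℝ) < (1 - binEnt ε) * (m : ℝ) →
      ∃ l : List ℚ,
        l.Nodup ∧ (∀ x ∈ l, 0 ≤ x ∧ x ≤ 1) ∧ l.length ≤ 2 * m ∧
        ∀ a : Fin (2 ^ b),
          ε * (m : ℝ) ≤
            ((Finset.univ.filter (fun i : Fin l.length =>
              A a (l.take (i : ℕ)) (l.get i) ≠ pmCorrect l i)).card : ℝ) := by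
  refine ⟨0, fun m _ hb => ?_⟩
  have hcount : (Fintype.card (Fin (2 ^ b)) : ℝ) * 2 ^ (binEnt ε * Fintype.card (Fin m)) <
      2 ^ Fintype.card (Fin m) := by
    simp only [Fintype.card_fin, Nat.cast_pow, Nat.cast_ofNat]
    rw [← Real.rpow_natCast, ← Real.rpow_natCast, ← Real.rpow_add two_pos]
    exact Real.rpow_lt_rpow_of_exponent_lt one_lt_two (by linarith)
  obtain ⟨T, hT⟩ := exists_forall_le_hammingDist hε0 hε1
    (fun a (k : Fin m) => A a ((List.range k).map (lowValue m)) (lowValue m k)) hcount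
  refine ⟨hardInput m T, nodup_hardInput T, fun q => mem_Icc_of_mem_hardInput T,
    length_hardInput_le T, fun a => ?_⟩
  have hfar := hT a
  rw [Fintype.card_fin] at hfar
  exact hfar.trans (Nat.cast_le.mpr (hammingDist_le_mistakes (A a) T))
end

section
/- For Pair Matching, no fixed priority algorithm reading fewer than (1 − H(ε))n/2 advice bits can make fewer than εn mistakes, for any ε ∈ (0, 1/2] and large enough n. Formally: for every injective priority function P : ℚ → ℝ, every ε ∈ (0, 1/2], every b ∈ ℕ, and every decision map D : Fin (2^b) → List ℚ → ℚ → Bool, for all sufficiently large m, if b < (1 − H(ε))m then there exists a Pair Matching input of length N ≤ 2m (pairwise distinct rationals in [0,1]) such that, when the items are presented in decreasing order of P, for every advice value a ∈ Fin (2^b) the number of incorrect answers of D under advice a is at least εm (hence at least εN/2). -/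
namespace PairMatching

open Finset Function

section Priority

variable {α β : Type*} [LinearOrder β] (P : α → β)

theorem nodup_of_pairwise_lt {l : List α} (hl : l.Pairwise fun u v => P v < P u) : l.Nodup :=
  hl.imp fun h e => h.ne (congrArg P e).symm

theorem take_eq_filter_of_pairwise_lt {l : List α} (hl : l.Pairwise fun u v => P v < P u)
    {k : ℕ} (hk : k < l.length) : l.take k = l.filter fun y => P l[k] < P y := by
  induction l generalizing k with
  | nil => simp at hk
  | cons a t ih =>
    rw [List.pairwise_cons] at hl
    cases k with
    | zero =>
      simpa [List.filter_eq_nil_iff] using fun y hy => (hl.1 y hy).le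
    | succ k =>
      have hk' : k < t.length := by simpa using hk
      simp [ih hl.2 hk', hl.1 _ (List.getElem_mem hk')]

theorem filter_eq_filter_of_pairwise_lt {l l' : List α} (hl : l.Pairwise fun u v => P v < P u)
    (hl' : l'.Pairwise fun u v => P v < P u) {x : β}
    (h : ∀ y, x < P y → (y ∈ l ↔ y ∈ l')) :
    l.filter (fun y => x < P y) = l'.filter (fun y => x < P y) := by
  refine List.Perm.eq_of_pairwise (fun a b _ _ hab hba => (lt_asymm hab hba).elim)
    (hl.filter _) (hl'.filter _) ?_
  rw [List.perm_ext_iff_of_nodup (nodup_of_pairwise_lt P (hl.filter _))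
    (nodup_of_pairwise_lt P (hl'.filter _))]
  intro y
  simp only [List.mem_filter, decide_eq_true_eq]
  exact ⟨fun ⟨hy, hx⟩ => ⟨(h y hx).1 hy, hx⟩, fun ⟨hy, hx⟩ => ⟨(h y hx).2 hy, hx⟩⟩

noncomputable def sortByPriority (s : Finset α) : List α :=
  s.toList.mergeSort fun x y => decide (P y ≤ P x)

@[simp]
theorem mem_sortByPriority {s : Finset α} {y : α} : y ∈ sortByPriority P s ↔ y ∈ s := by
  simp [sortByPriority]

@[simp]
theorem length_sortByPriority (s : Finset α) : (sortByPriority P s).length = s.card := by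
  simp [sortByPriority]

variable {P} in
theorem pairwise_sortByPriority (hP : Injective P) (s : Finset α) :
    (sortByPriority P s).Pairwise fun u v => P v < P u := by
  have hsorted := List.pairwise_mergeSort (le := fun x y => decide (P y ≤ P x))
    (fun a b c hab hbc => by simp_all only [decide_eq_true_eq]; exact hbc.trans hab)
    (fun a b => by simpa using le_total (P b) (P a)) s.toList
  have hnodup : (sortByPriority P s).Nodup :=
    (List.mergeSort_perm _ _).nodup_iff.mpr s.nodup_toList
  exact (hsorted.and hnodup).imp fun ⟨hle, hne⟩ =>
    lt_of_le_of_ne (of_decide_eq_true hle) fun e => hne (hP e).symm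

end Priority

section Guessing

variable {α : Type*} [Fintype α] [DecidableEq α]

def errorSet (f : Finset α → α → Bool) (σ : Finset α) : Finset α :=
  {i | f σ i ≠ decide (i ∈ σ)}

theorem errorSet_injective {r : α → α → Prop} (hr : WellFounded r) {f : Finset α → α → Bool}
    (hf : ∀ σ τ i, (∀ j, r j i → (j ∈ σ ↔ j ∈ τ)) → f σ i = f τ i) :
    Injective (errorSet f) := by
  intro σ τ h
  ext i
  induction i using hr.induction with
  | _ i ih =>
    have hi : f σ i ≠ decide (i ∈ σ) ↔ f τ i ≠ decide (i ∈ τ) := by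
      simpa [errorSet] using congrArg (i ∈ ·) h
    rw [hf σ τ i ih] at hi
    generalize f τ i = b at hi
    cases b <;> simpa [not_iff_not] using hi

theorem card_le_card_mul_card_of_forall_exists {X A Y : Type*} [Fintype X] [Fintype A]
    {f : A → X → Y} (hf : ∀ a, Injective (f a)) (T : Finset Y) (hT : ∀ x, ∃ a, f a x ∈ T) :
    Fintype.card X ≤ Fintype.card A * #T := by
  choose a ha using hT
  have hinj : Injective fun x => (a x, (⟨f (a x) x, ha x⟩ : T)) := by
    intro x y hxy
    simp only [Prod.mk.injEq, Subtype.mk.injEq] at hxy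
    obtain ⟨hax, hfx⟩ := hxy
    rw [hax] at hfx
    exact hf _ hfx
  simpa using Fintype.card_le_of_injective _ hinj

theorem two_rpow_neg_binEnt_mul_le {ε : ℝ} (hε0 : 0 < ε) (hε1 : ε ≤ 1 / 2) {n k : ℕ}
    (hk : (k : ℝ) ≤ ε * n) : (2 : ℝ) ^ (-(binEnt ε * n)) ≤ ε ^ k * (1 - ε) ^ (n - k) := by
  have hkn : k ≤ n := by
    have : (k : ℝ) ≤ n := by nlinarith [n.cast_nonneg (α := ℝ)]
    exact_mod_cast this
  set A := Real.logb 2 ε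
  set B := Real.logb 2 (1 - ε)
  have hAB : A ≤ B := Real.logb_le_logb_of_le one_lt_two hε0 (by linarith)
  have hε : ε ^ k = 2 ^ (A * k) := by
    rw [Real.rpow_mul zero_le_two, Real.rpow_logb two_pos (by norm_num) hε0, Real.rpow_natCast]
  have hε' : (1 - ε) ^ (n - k) = 2 ^ (B * (n - k : ℕ)) := by
    rw [Real.rpow_mul zero_le_two, Real.rpow_logb two_pos (by norm_num) (by linarith),
      Real.rpow_natCast]
  rw [hε, hε', ← Real.rpow_add two_pos, Real.rpow_le_rpow_left_iff one_lt_two, binEnt,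
    Nat.cast_sub hkn]
  -- `k ↦ A k + B (n - k)` is antitone and equals `-H(ε) n` at `k = ε n`.
  nlinarith [mul_nonneg (sub_nonneg.mpr hAB) (sub_nonneg.mpr hk)]

theorem card_filter_powerset_le_two_rpow_binEnt {ε : ℝ} (hε0 : 0 < ε) (hε1 : ε ≤ 1 / 2)
    {ι : Type*} (t : Finset ι) :
    (#{s ∈ t.powerset | (#s : ℝ) ≤ ε * #t} : ℝ) ≤ 2 ^ (binEnt ε * #t) := by
  set S := {s ∈ t.powerset | (#s : ℝ) ≤ ε * #t}
  have hsum : #S * (2 : ℝ) ^ (-(binEnt ε * #t)) ≤ 1 :=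
    calc #S * (2 : ℝ) ^ (-(binEnt ε * #t))
        = ∑ s ∈ S, (2 : ℝ) ^ (-(binEnt ε * #t)) := by rw [sum_const, nsmul_eq_mul]
      _ ≤ ∑ s ∈ S, ε ^ #s * (1 - ε) ^ (#t - #s) :=
        sum_le_sum fun s hs => two_rpow_neg_binEnt_mul_le hε0 hε1 (mem_filter.1 hs).2
      _ ≤ ∑ s ∈ t.powerset, ε ^ #s * (1 - ε) ^ (#t - #s) := by
        have : 0 ≤ 1 - ε := by linarith
        exact sum_le_sum_of_subset_of_nonneg (filter_subset _ _) fun _ _ _ => by positivity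
      _ = 1 := by rw [sum_pow_mul_eq_add_pow]; simp
  rwa [Real.rpow_neg zero_le_two, ← div_eq_mul_inv, div_le_one (by positivity)] at hsum

theorem exists_forall_le_card_errorSet {A : Type*} [Fintype A] {ε : ℝ} (hε0 : 0 < ε)
    (hε1 : ε ≤ 1 / 2) {f : A → Finset α → α → Bool} (hf : ∀ a, Injective (errorSet (f a)))
    (hA : (Fintype.card A : ℝ) < 2 ^ ((1 - binEnt ε) * Fintype.card α)) :
    ∃ σ, ∀ a, ε * Fintype.card α ≤ #(errorSet (f a) σ) := by
  by_contra! h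
  have hcover : Fintype.card (Finset α) ≤
      Fintype.card A * #{s ∈ (univ : Finset α).powerset | (#s : ℝ) ≤ ε * #(univ : Finset α)} :=
    card_le_card_mul_card_of_forall_exists hf _ fun σ =>
      (h σ).imp fun a ha => by simpa using ha.le
  have hsmall := card_filter_powerset_le_two_rpow_binEnt hε0 hε1 (univ : Finset α)
  rw [Fintype.card_finset] at hcover
  rw [card_univ] at hcover hsmall
  have : (2 : ℝ) ^ Fintype.card α < 2 ^ Fintype.card α :=
    calc (2 : ℝ) ^ Fintype.card α
        ≤ Fintype.card A * #{s ∈ (univ : Finset α).powerset | (#s : ℝ) ≤ ε * Fintype.card α} := by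
          exact_mod_cast hcover
      _ ≤ Fintype.card A * 2 ^ (binEnt ε * Fintype.card α) := by gcongr
      _ < 2 ^ ((1 - binEnt ε) * Fintype.card α) * 2 ^ (binEnt ε * Fintype.card α) := by gcongr
      _ = 2 ^ Fintype.card α := by rw [← Real.rpow_add two_pos, ← Real.rpow_natCast]; ring_nf
  exact lt_irrefl _ this

end Guessing

theorem pmCorrect_eq_true_iff {l : List ℚ} (hl : l.Nodup) (k : Fin l.length) :
    pmCorrect l k = true ↔ 1 - l.get k ∈ l ∧ 1 - l.get k ≠ l.get k := by
  simp only [pmCorrect, decide_eq_true_eq]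
  constructor
  · rintro ⟨j, hjk, hsum⟩
    have hj : l.get j = 1 - l.get k := by linarith
    exact ⟨by rw [← hj]; exact l.get_mem j, fun h => hjk (hl.get_inj_iff.mp (hj.trans h))⟩
  · rintro ⟨hmem, hne⟩
    obtain ⟨j, hj⟩ := List.mem_iff_get.mp hmem
    exact ⟨j, fun h => hne (by subst h; exact hj.symm), by rw [hj]; ring⟩

def low (i : ℕ) : ℚ := 1 / (i + 3)

theorem low_pos (i : ℕ) : 0 < low i := by unfold low; positivity

theorem low_lt_half (i : ℕ) : low i < 1 / 2 := by
  unfold low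
  rw [div_lt_div_iff₀ (by positivity) two_pos]
  linarith [i.cast_nonneg (α := ℚ)]

theorem low_injective : Injective low := by
  intro i j h
  simpa [low] using h

variable {P : ℚ → ℝ}

noncomputable def first (P : ℚ → ℝ) (i : ℕ) : ℚ :=
  if P (1 - low i) < P (low i) then low i else 1 - low i

theorem min_first_one_sub_first (i : ℕ) : min (first P i) (1 - first P i) = low i := by
  have : low i ≤ 1 - low i := by linarith [low_lt_half i]
  unfold first
  split_ifs <;> simp [this]

theorem first_injective : Injective (first P) := by
  intro i j h
  apply low_injective
  rw [← min_first_one_sub_first (P := P) i, ← min_first_one_sub_first (P := P) j, h]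

theorem first_ne_one_sub_first (i j : ℕ) : first P i ≠ 1 - first P j := by
  intro h
  have hij : i = j := by
    apply low_injective
    rw [← min_first_one_sub_first (P := P) i, ← min_first_one_sub_first (P := P) j, h,
      sub_sub_cancel, min_comm]
  subst hij
  have : min (first P i) (1 - first P i) < 1 / 2 := by
    rw [min_first_one_sub_first]; exact low_lt_half i
  rw [← h, min_self] at this
  linarith

theorem first_mem_Ioo (i : ℕ) : first P i ∈ Set.Ioo 0 1 := by
  have := low_pos i
  have := low_lt_half i
  unfold first
  split_ifs <;> constructor <;> linarith

theorem P_one_sub_first_lt (hP : Injective P) (i : ℕ) : P (1 - first P i) < P (first P i) := by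
  unfold first
  split_ifs with h
  · exact h
  · rw [sub_sub_cancel]
    refine lt_of_le_of_ne (not_lt.mp h) fun e => ?_
    linarith [low_lt_half i, hP e]

noncomputable def items (P : ℚ → ℝ) (m : ℕ) (σ : Finset (Fin m)) : Finset ℚ :=
  univ.image (fun i : Fin m => first P i) ∪ σ.image (fun i : Fin m => 1 - first P i)

theorem mem_items {m : ℕ} {σ : Finset (Fin m)} {y : ℚ} :
    y ∈ items P m σ ↔ (∃ i : Fin m, first P i = y) ∨ ∃ i ∈ σ, 1 - first P i = y := by
  simp [items]

theorem one_sub_first_mem_items_iff {m : ℕ} {σ : Finset (Fin m)} {i : Fin m} :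
    1 - first P i ∈ items P m σ ↔ i ∈ σ := by
  rw [mem_items]
  constructor
  · rintro (⟨j, hj⟩ | ⟨j, hj, hji⟩)
    · exact absurd hj (first_ne_one_sub_first j i)
    · rwa [Fin.ext (first_injective (sub_right_injective hji))] at hj
  · exact fun hi => Or.inr ⟨i, hi, rfl⟩

theorem card_items_le (m : ℕ) (σ : Finset (Fin m)) : #(items P m σ) ≤ 2 * m := by
  calc #(items P m σ) ≤ #(univ : Finset (Fin m)) + #σ :=
        (card_union_le _ _).trans (add_le_add card_image_le card_image_le)
    _ ≤ 2 * m := by simpa [two_mul] using card_le_univ σ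

noncomputable def input (P : ℚ → ℝ) (m : ℕ) (σ : Finset (Fin m)) : List ℚ :=
  sortByPriority P (items P m σ)

theorem mem_input {m : ℕ} {σ : Finset (Fin m)} {y : ℚ} :
    y ∈ input P m σ ↔ (∃ i : Fin m, first P i = y) ∨ ∃ i ∈ σ, 1 - first P i = y := by
  rw [input, mem_sortByPriority, mem_items]

theorem nonneg_and_le_one_of_mem_input {m : ℕ} {σ : Finset (Fin m)} {y : ℚ}
    (hy : y ∈ input P m σ) : 0 ≤ y ∧ y ≤ 1 := by
  rcases mem_input.mp hy with ⟨i, rfl⟩ | ⟨i, -, rfl⟩ <;>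
    obtain ⟨h₀, h₁⟩ := first_mem_Ioo (P := P) i <;> constructor <;> linarith

theorem pairwise_input (hP : Injective P) (m : ℕ) (σ : Finset (Fin m)) :
    (input P m σ).Pairwise fun u v => P v < P u :=
  pairwise_sortByPriority hP _

/-- By `take_eq_filter_of_pairwise_lt`, the filtered list is the list of items presented
before `first P i`. -/
noncomputable def answer (P : ℚ → ℝ) (Dc : List ℚ → ℚ → Bool) (m : ℕ) (σ : Finset (Fin m))
    (i : Fin m) : Bool :=
  Dc ((input P m σ).filter fun y => P (first P i) < P y) (first P i)

theorem answer_congr (hP : Injective P) (Dc : List ℚ → ℚ → Bool) {m : ℕ}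
    {σ τ : Finset (Fin m)} {i : Fin m}
    (h : ∀ j : Fin m, P (first P i) < P (first P j) → (j ∈ σ ↔ j ∈ τ)) :
    answer P Dc m σ i = answer P Dc m τ i := by
  unfold answer input
  rw [filter_eq_filter_of_pairwise_lt P (pairwise_sortByPriority hP _)
    (pairwise_sortByPriority hP _)]
  intro y hy
  simp only [mem_sortByPriority, mem_items]
  refine or_congr Iff.rfl ⟨?_, ?_⟩ <;> rintro ⟨j, hj, rfl⟩ <;>
    have hij := hy.trans (P_one_sub_first_lt hP j)
  · exact ⟨j, (h j hij).1 hj, rfl⟩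
  · exact ⟨j, (h j hij).2 hj, rfl⟩

theorem errorSet_answer_injective (hP : Injective P) (Dc : List ℚ → ℚ → Bool) (m : ℕ) :
    Injective (errorSet (answer P Dc m)) := by
  let r : Fin m → Fin m → Prop := fun j i => P (first P i) < P (first P j)
  have : IsTrans (Fin m) r := ⟨fun _ _ _ h₁ h₂ => h₂.trans h₁⟩
  have : Std.Irrefl r := ⟨fun _ => lt_irrefl _⟩
  exact errorSet_injective (Finite.wellFounded_of_trans_of_irrefl r)
    fun _ _ _ => answer_congr hP Dc

theorem card_errorSet_answer_le (hP : Injective P) (Dc : List ℚ → ℚ → Bool) (m : ℕ)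
    (σ : Finset (Fin m)) :
    #(errorSet (answer P Dc m) σ) ≤
      #{k : Fin (input P m σ).length |
        Dc ((input P m σ).take k) ((input P m σ).get k) ≠ pmCorrect (input P m σ) k} := by
  set l := input P m σ
  have hl := pairwise_input hP m σ
  have hmem (i : Fin m) : first P i ∈ l := mem_input.mpr (Or.inl ⟨i, rfl⟩)
  let pos (i : Fin m) : Fin l.length :=
    ⟨l.idxOf (first P i), List.idxOf_lt_length_iff.mpr (hmem i)⟩
  have hget (i : Fin m) : l.get (pos i) = first P i := List.idxOf_get _
  refine card_le_card_of_injOn pos (fun i hi => ?_) fun i _ j _ hij => ?_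
  · have htake : l.take (pos i) = l.filter fun y => P (first P i) < P y := by
      rw [take_eq_filter_of_pairwise_lt P hl (pos i).2, ← hget i, List.get_eq_getElem]
    have hcorrect : pmCorrect l (pos i) = decide (i ∈ σ) := by
      rw [Bool.eq_iff_iff, pmCorrect_eq_true_iff (nodup_of_pairwise_lt P hl), hget,
        decide_eq_true_iff, ← one_sub_first_mem_items_iff (P := P), ← mem_sortByPriority P]
      exact and_iff_left (first_ne_one_sub_first i i).symm
    simp only [errorSet, coe_filter, Set.mem_ofPred_eq, mem_univ, true_and] at hi ⊢
    rwa [htake, hget, hcorrect]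
  · exact Fin.ext (first_injective (by rw [← hget i, ← hget j, hij]))

end PairMatching

open PairMatching

/-- For Pair Matching, no fixed priority algorithm reading fewer than
`(1 − H(ε))n/2` advice bits can make fewer than `εn` mistakes, for any
`ε ∈ (0, 1/2]` and large enough `n`: for every injective priority function `P`
and decision map `D`, for all sufficiently large `m`, if `b < (1 − H(ε))·m`,
there is an input of length `N ≤ 2m` of pairwise distinct rationals in `[0,1]`,
presented in decreasing order of `P`, on which for every advice value `D`
makes at least `εm` (hence at least `εN/2`) mistakes. -/
theorem pm_priority_advice_lower_bound
    (P : ℚ → ℝ) (hP : Function.Injective P)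
    (ε : ℝ) (hε0 : 0 < ε) (hε1 : ε ≤ 1 / 2) (b : ℕ)
    (D : Fin (2 ^ b) → List ℚ → ℚ → Bool) :
    ∃ M : ℕ, ∀ m : ℕ, M ≤ m →
      (b : ℝ) < (1 - binEnt ε) * (m : ℝ) →
      ∃ l : List ℚ,
        l.Nodup ∧ (∀ x ∈ l, 0 ≤ x ∧ x ≤ 1) ∧ l.length ≤ 2 * m ∧
        l.Pairwise (fun u v => P v < P u) ∧
        ∀ a : Fin (2 ^ b),
          ε * (m : ℝ) ≤
            ((Finset.univ.filter (fun i : Fin l.length =>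
              D a (l.take (i : ℕ)) (l.get i) ≠ pmCorrect l i)).card : ℝ) := by
  refine ⟨0, fun m _ hbm => ?_⟩
  have hadvice : (Fintype.card (Fin (2 ^ b)) : ℝ) <
      2 ^ ((1 - binEnt ε) * Fintype.card (Fin m)) := by
    simpa [← Real.rpow_natCast] using (Real.rpow_lt_rpow_left_iff one_lt_two).mpr hbm
  obtain ⟨σ, hσ⟩ := exists_forall_le_card_errorSet hε0 hε1
    (fun a => errorSet_answer_injective hP (D a) m) hadvice
  refine ⟨input P m σ, nodup_of_pairwise_lt P (pairwise_input hP m σ),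
    fun x => nonneg_and_le_one_of_mem_input, ?_, pairwise_input hP m σ, fun a => ?_⟩
  · rw [input, length_sortByPriority]
    exact card_items_le m σ
  · simpa using (hσ a).trans (by exact_mod_cast card_errorSet_answer_le hP (D a) m σ)
end

section
/- For Triangle Finding in the vertex arrival, vertex adjacency model, for every injective priority function P : ℕ × Finset ℕ → ℝ, every ε ∈ (0, 1/2], every b ∈ ℕ, and every decision map D : Fin (2^b) → List (ℕ × Finset ℕ) → (ℕ × Finset ℕ) → Bool, for all sufficiently large m, if b < (1 − H(ε))m/2 then there exists a consistent input with n ≤ 4m items such that, when the items are presented in decreasing order of P, for every advice value a ∈ Fin (2^b) the number of items answered incorrectly is at least εm/2 (hence at least εn/8). -/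
/-- An input item in the vertex arrival, vertex adjacency model: a vertex name
together with the set of names of its neighbors. -/
abbrev GItem := ℕ × Finset ℕ

/-- Consistency of an input in the vertex arrival, vertex adjacency model: the
vertex names are pairwise distinct, there are no self-loops, `u ∈ N_v` iff
`v ∈ N_u`, and every neighbor name occurs as the vertex name of some item; such
an input determines a finite simple graph. -/
def ConsistentInput (l : List GItem) : Prop :=
  (l.map Prod.fst).Nodup ∧
  (∀ p ∈ l, p.1 ∉ p.2) ∧
  (∀ p ∈ l, ∀ q ∈ l, (p.1 ∈ q.2 ↔ q.1 ∈ p.2)) ∧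
  (∀ p ∈ l, ∀ v ∈ p.2, ∃ q ∈ l, q.1 = v)

/-- The vertex of item `p` lies on a triangle of the graph determined by `l`. -/
def OnTriangle (l : List GItem) (p : GItem) : Prop :=
  ∃ a ∈ p.2, ∃ b ∈ p.2, a ≠ b ∧ ∃ q ∈ l, q.1 = a ∧ b ∈ q.2


namespace TFLB
open scoped Classical


lemma sum_choose_le {ε : ℝ} (hε0 : 0 < ε) (hε1 : ε ≤ 1/2) {n K : ℕ} (hKn : K ≤ n) :
    (∑ k ∈ Finset.range (K+1), (n.choose k : ℝ)) * (ε^K * (1-ε)^(n-K)) ≤ 1 := by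
  have h1 : 0 < 1 - ε := by linarith
  have key : ∀ k ∈ Finset.range (K+1),
      (n.choose k : ℝ) * (ε^K * (1-ε)^(n-K)) ≤ (n.choose k : ℝ) * (ε^k * (1-ε)^(n-k)) := by
    intro k hk
    have hkK : k ≤ K := Nat.lt_succ_iff.mp (Finset.mem_range.mp hk)
    apply mul_le_mul_of_nonneg_left _ (by positivity)
    have e1 : ε^K = ε^k * ε^(K-k) := by rw [← pow_add]; congr 1; omega
    have e2 : (1-ε)^(n-k) = (1-ε)^(n-K) * (1-ε)^(K-k) := by rw [← pow_add]; congr 1; omega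
    rw [e1, e2]
    have h2 : ε^(K-k) ≤ (1-ε)^(K-k) := pow_le_pow_left₀ hε0.le (by linarith) _
    nlinarith [mul_le_mul_of_nonneg_left h2 (by positivity : (0:ℝ) ≤ ε^k * (1-ε)^(n-K)),
      pow_nonneg hε0.le k, pow_nonneg h1.le (n-K)]
  have bino : ∑ k ∈ Finset.range (n+1), (n.choose k : ℝ) * (ε^k * (1-ε)^(n-k)) = 1 := by
    calc ∑ k ∈ Finset.range (n+1), (n.choose k : ℝ) * (ε^k * (1-ε)^(n-k))
        = ∑ k ∈ Finset.range (n+1), ε^k * (1-ε)^(n-k) * (n.choose k : ℝ) := by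
          apply Finset.sum_congr rfl; intros; ring
      _ = (ε + (1-ε))^n := (add_pow ε (1-ε) n).symm
      _ = 1 := by norm_num
  calc (∑ k ∈ Finset.range (K+1), (n.choose k : ℝ)) * (ε^K * (1-ε)^(n-K))
      = ∑ k ∈ Finset.range (K+1), (n.choose k : ℝ) * (ε^K * (1-ε)^(n-K)) := by
        rw [Finset.sum_mul]
    _ ≤ ∑ k ∈ Finset.range (K+1), (n.choose k : ℝ) * (ε^k * (1-ε)^(n-k)) :=
        Finset.sum_le_sum key
    _ ≤ ∑ k ∈ Finset.range (n+1), (n.choose k : ℝ) * (ε^k * (1-ε)^(n-k)) := by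
        apply Finset.sum_le_sum_of_subset_of_nonneg
        · exact Finset.range_subset_range.mpr (by omega)
        · intros; positivity
    _ = 1 := bino

lemma main_count {ε : ℝ} (hε0 : 0 < ε) (hε1 : ε ≤ 1/2) {n K b : ℕ}
    (hn : 0 < n) (hK : (K:ℝ) ≤ ε * n) (hb : (b:ℝ) < (1 - binEnt ε) * n) :
    ((2:ℝ)^b) * (∑ k ∈ Finset.range (K+1), (n.choose k : ℝ)) < 2^n := by
  have h1 : 0 < 1 - ε := by linarith
  have hKn : K ≤ n := by
    have : (K:ℝ) ≤ n := le_trans hK (by nlinarith)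
    exact_mod_cast this
  have hpos : (0:ℝ) < ε^K * (1-ε)^(n-K) := by positivity
  have hSum : (∑ k ∈ Finset.range (K+1), (n.choose k : ℝ)) ≤ 1 / (ε^K * (1-ε)^(n-K)) := by
    rw [le_div_iff₀ hpos]; exact sum_choose_le hε0 hε1 hKn
  set L := Real.logb 2 ε with hL
  set L' := Real.logb 2 (1-ε) with hL'
  have eK : (2:ℝ)^(L*(K:ℝ)) = ε ^ K := by
    rw [Real.rpow_mul (by norm_num), Real.rpow_logb (by norm_num) (by norm_num) hε0,
      Real.rpow_natCast]
  have eNK : (2:ℝ)^(L'*((n-K : ℕ):ℝ)) = (1-ε) ^ (n-K) := by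
    rw [Real.rpow_mul (by norm_num), Real.rpow_logb (by norm_num) (by norm_num) h1,
      Real.rpow_natCast]
  have hcast : ((n-K : ℕ):ℝ) = (n:ℝ) - K := by
    rw [Nat.cast_sub hKn]
  have hLL' : L ≤ L' := by
    rw [hL, hL']
    exact (Real.logb_le_logb one_lt_two hε0 h1).mpr (by linarith)
  have hexp : (b:ℝ) < (n:ℝ) + L*(K:ℝ) + L'*((n:ℝ)-(K:ℝ)) := by
    have hb' : (b:ℝ) < (n:ℝ) + (ε*n)*L + ((1-ε)*n)*L' := by
      have : (1 - binEnt ε) * n = (n:ℝ) + (ε*n)*L + ((1-ε)*n)*L' := by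
        rw [binEnt, hL, hL']; ring
      linarith [hb, this.symm.le]
    nlinarith [hK, hLL']
  have hkey : (2:ℝ)^b < 2^n * (ε^K * (1-ε)^(n-K)) := by
    have : (2:ℝ)^((b:ℕ):ℝ) < (2:ℝ)^((n:ℝ) + L*(K:ℝ) + L'*((n:ℝ)-(K:ℝ))) :=
      Real.rpow_lt_rpow_left_iff one_lt_two |>.mpr hexp
    calc (2:ℝ)^b = (2:ℝ)^((b:ℕ):ℝ) := (Real.rpow_natCast 2 b).symm
      _ < (2:ℝ)^((n:ℝ) + L*(K:ℝ) + L'*((n:ℝ)-(K:ℝ))) := this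
      _ = (2:ℝ)^((n:ℕ):ℝ) * ((2:ℝ)^(L*(K:ℝ)) * (2:ℝ)^(L'*((n:ℝ)-(K:ℝ)))) := by
          rw [← Real.rpow_add (by norm_num), ← Real.rpow_add (by norm_num)]
          congr 1; ring
      _ = 2^n * (ε^K * (1-ε)^(n-K)) := by
          rw [Real.rpow_natCast, eK, ← hcast, eNK]
  calc ((2:ℝ)^b) * (∑ k ∈ Finset.range (K+1), (n.choose k : ℝ))
      ≤ ((2:ℝ)^b) * (1 / (ε^K * (1-ε)^(n-K))) := by
        apply mul_le_mul_of_nonneg_left hSum (by positivity)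
    _ < 2^n := by
        rw [mul_one_div, div_lt_iff₀ hpos]; exact hkey



lemma online_counting {m : ℕ} (ρ : Fin m → ℝ) (hρ : Function.Injective ρ)
    (F : Fin m → (Fin m → Bool) → Bool)
    (hF : ∀ i σ τ, (∀ j, ρ j < ρ i → σ j = τ j) → F i σ = F i τ) (K : ℕ) :
    (Finset.univ.filter fun σ : Fin m → Bool =>
        (Finset.univ.filter fun i => F i σ ≠ σ i).card ≤ K).card
      ≤ ∑ k ∈ Finset.range (K+1), m.choose k := by
  classical
  set M : (Fin m → Bool) → Finset (Fin m) := fun σ => Finset.univ.filter fun i => F i σ ≠ σ i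
    with hM
  have hinj : Function.Injective M := by
    intro σ τ hMeq
    funext i
    -- strong induction on the number of j with ρ j < ρ i
    have main : ∀ n : ℕ, ∀ i : Fin m, (Finset.univ.filter fun j => ρ j < ρ i).card = n →
        σ i = τ i := by
      intro n
      induction n using Nat.strong_induction_on with
      | _ n ih =>
        intro i hcard
        have hagree : ∀ j, ρ j < ρ i → σ j = τ j := by
          intro j hj
          have hsub : (Finset.univ.filter fun k => ρ k < ρ j) ⊂
              (Finset.univ.filter fun k => ρ k < ρ i) := by
            constructor
            · intro k hk
              simp only [Finset.mem_filter, Finset.mem_univ, true_and] at *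
              exact lt_trans hk hj
            · intro hcon
              have hj2 := hcon (by simp [hj] : j ∈ (Finset.univ.filter fun k => ρ k < ρ i))
              simp at hj2
          have hlt : (Finset.univ.filter fun k => ρ k < ρ j).card < n := by
            rw [← hcard]; exact Finset.card_lt_card hsub
          exact ih _ hlt j rfl
        have hFeq : F i σ = F i τ := hF i σ τ hagree
        have hmem : (i ∈ M σ) = (i ∈ M τ) := by rw [hMeq]
        simp only [hM, Finset.mem_filter, Finset.mem_univ, true_and, eq_iff_iff] at hmem
        by_cases h : F i σ = σ i
        · have : F i τ = τ i := by
            by_contra hc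
            have := hmem.mpr hc
            exact this h
          rw [← h, ← this, hFeq]
        · have : ¬ F i τ = τ i := hmem.mp h
          have h1 : σ i = !(F i σ) := by
            cases hσ : σ i <;> cases hFσ : F i σ <;> simp_all
          have h2 : τ i = !(F i τ) := by
            cases hτ : τ i <;> cases hFτ : F i τ <;> simp_all
          rw [h1, h2, hFeq]
    exact main _ i rfl
  -- now count
  have himg : ∀ σ ∈ (Finset.univ.filter fun σ : Fin m → Bool => (M σ).card ≤ K),
      M σ ∈ (Finset.range (K+1)).biUnion
        (fun k => Finset.powersetCard k (Finset.univ : Finset (Fin m))) := by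
    intro σ hσ
    simp only [Finset.mem_filter] at hσ
    simp only [Finset.mem_biUnion, Finset.mem_range, Finset.mem_powersetCard]
    exact ⟨(M σ).card, Nat.lt_succ_of_le hσ.2, Finset.subset_univ _, rfl⟩
  calc (Finset.univ.filter fun σ : Fin m → Bool => (M σ).card ≤ K).card
      ≤ ((Finset.range (K+1)).biUnion
        (fun k => Finset.powersetCard k (Finset.univ : Finset (Fin m)))).card :=
        Finset.card_le_card_of_injOn M himg (Function.Injective.injOn hinj)
    _ ≤ ∑ k ∈ Finset.range (K+1), (Finset.powersetCard k (Finset.univ : Finset (Fin m))).card :=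
        Finset.card_biUnion_le
    _ = ∑ k ∈ Finset.range (K+1), m.choose k := by
        apply Finset.sum_congr rfl
        intro k _
        rw [Finset.card_powersetCard, Finset.card_univ, Fintype.card_fin]



def vset (t a b z : ℕ) : Bool → Finset GItem
  | true => {(t,{a,b}), (a,{t,b}), (b,{t,a})}
  | false => {(t,{a,b}), (a,{t,z}), (b,{t,z}), (z,{a,b})}

section Gadget

variable {t a b z : ℕ} (hta : t ≠ a) (htb : t ≠ b) (htz : t ≠ z)
  (hab : a ≠ b) (haz : a ≠ z) (hbz : b ≠ z)

lemma vset_names : ∀ s, ∀ x ∈ vset t a b z s,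
    x.1 ∈ ({t,a,b,z} : Finset ℕ) ∧ x.2 ⊆ ({t,a,b,z} : Finset ℕ) := by
  intro s x hx
  cases s <;> simp only [vset, Finset.mem_insert, Finset.mem_singleton] at hx <;>
    rcases hx with rfl|rfl|rfl|rfl <;>
    refine ⟨by simp, fun y hy => ?_⟩ <;>
    · simp only [Finset.mem_insert, Finset.mem_singleton] at hy ⊢
      tauto

include hta htb htz hab haz hbz in
lemma vset_fst_inj : ∀ s, ∀ x ∈ vset t a b z s, ∀ y ∈ vset t a b z s,
    x.1 = y.1 → x = y := by
  intro s x hx y hy hxy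
  cases s
  · simp only [vset, Finset.mem_insert, Finset.mem_singleton] at hx hy
    rcases hx with rfl|rfl|rfl|rfl <;> rcases hy with rfl|rfl|rfl|rfl <;>
      first | rfl | (exfalso; simp_all) | (exfalso; simp_all; omega)
  · simp only [vset, Finset.mem_insert, Finset.mem_singleton] at hx hy
    rcases hx with rfl|rfl|rfl <;> rcases hy with rfl|rfl|rfl <;>
      first | rfl | (exfalso; simp_all) | (exfalso; simp_all; omega)

include hta htb htz hab haz hbz in
lemma vset_no_self : ∀ s, ∀ x ∈ vset t a b z s, x.1 ∉ x.2 := by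
  intro s x hx
  cases s
  · simp only [vset, Finset.mem_insert, Finset.mem_singleton] at hx
    rcases hx with rfl|rfl|rfl|rfl <;> (simp_all; try omega)
  · simp only [vset, Finset.mem_insert, Finset.mem_singleton] at hx
    rcases hx with rfl|rfl|rfl <;> (simp_all; try omega)

include hta htb htz hab haz hbz in
lemma vset_symm : ∀ s, ∀ x ∈ vset t a b z s, ∀ y ∈ vset t a b z s,
    (x.1 ∈ y.2 ↔ y.1 ∈ x.2) := by
  intro s x hx y hy
  cases s
  · simp only [vset, Finset.mem_insert, Finset.mem_singleton] at hx hy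
    rcases hx with rfl|rfl|rfl|rfl <;> rcases hy with rfl|rfl|rfl|rfl <;>
      (dsimp only; simp only [Finset.mem_insert, Finset.mem_singleton, true_or, or_true,
        eq_self_iff_true, iff_true, true_iff, iff_self]; try omega)
  · simp only [vset, Finset.mem_insert, Finset.mem_singleton] at hx hy
    rcases hx with rfl|rfl|rfl <;> rcases hy with rfl|rfl|rfl <;>
      (dsimp only; simp only [Finset.mem_insert, Finset.mem_singleton, true_or, or_true,
        eq_self_iff_true, iff_true, true_iff, iff_self]; try omega)

lemma vset_closure : ∀ s, ∀ x ∈ vset t a b z s, ∀ v ∈ x.2,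
    ∃ q ∈ vset t a b z s, q.1 = v := by
  intro s x hx v hv
  cases s
  · -- false variant
    have hsub : x.2 ⊆ ({t,a,b,z} : Finset ℕ) := by
      simp only [vset, Finset.mem_insert, Finset.mem_singleton] at hx
      rcases hx with rfl|rfl|rfl|rfl <;> intro y hy <;>
        simp only [Finset.mem_insert, Finset.mem_singleton] at hy ⊢ <;> tauto
    have hv4 := hsub hv
    simp only [Finset.mem_insert, Finset.mem_singleton] at hv4
    rcases hv4 with rfl|rfl|rfl|rfl
    · exact ⟨(v,{a,b}), by simp [vset], rfl⟩
    · exact ⟨(v,{t,z}), by simp [vset], rfl⟩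
    · exact ⟨(v,{t,z}), by simp [vset], rfl⟩
    · exact ⟨(v,{a,b}), by simp [vset], rfl⟩
  · -- true variant
    have hsub : x.2 ⊆ ({t,a,b} : Finset ℕ) := by
      simp only [vset, Finset.mem_insert, Finset.mem_singleton] at hx
      rcases hx with rfl|rfl|rfl <;> intro y hy <;>
        simp only [Finset.mem_insert, Finset.mem_singleton] at hy ⊢ <;> tauto
    have hv4 := hsub hv
    simp only [Finset.mem_insert, Finset.mem_singleton] at hv4
    rcases hv4 with rfl|rfl|rfl
    · exact ⟨(v,{a,b}), by simp [vset], rfl⟩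
    · exact ⟨(v,{t,b}), by simp [vset], rfl⟩
    · exact ⟨(v,{t,a}), by simp [vset], rfl⟩

lemma vset_top_mem : ∀ s, ((t, ({a,b} : Finset ℕ)) : GItem) ∈ vset t a b z s := by
  intro s; cases s <;> simp [vset]

end Gadget




def SJ (j : ℕ) : Finset ℕ := {4*j, 4*j+1, 4*j+2, 4*j+3}

structure GSpec (P : GItem → ℝ) (j : ℕ) where
  t : ℕ
  a : ℕ
  b : ℕ
  z : ℕ
  ht : t ∈ SJ j
  ha : a ∈ SJ j
  hb : b ∈ SJ j
  hz : z ∈ SJ j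
  hta : t ≠ a
  htb : t ≠ b
  htz : t ≠ z
  hab : a ≠ b
  haz : a ≠ z
  hbz : b ≠ z
  topmax : ∀ s : Bool, ∀ x ∈ vset t a b z s,
    x ≠ ((t, ({a,b} : Finset ℕ)) : GItem) → P x < P ((t, ({a,b} : Finset ℕ)) : GItem)

lemma gspec_exists (P : GItem → ℝ) (hP : Function.Injective P) (j : ℕ) :
    Nonempty (GSpec P j) := by
  classical
  set S := SJ j with hS
  have hmem4 : ∀ x ∈ S, 4*j ≤ x ∧ x ≤ 4*j+3 := by
    intro x hx
    simp only [hS, SJ, Finset.mem_insert, Finset.mem_singleton] at hx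
    rcases hx with rfl|rfl|rfl|rfl <;> omega
  set C : Finset GItem := (S ×ˢ S.powersetCard 2).filter (fun p => p.1 ∉ p.2) with hC
  have hCne : C.Nonempty := by
    refine ⟨(4*j, {4*j+1, 4*j+2}), ?_⟩
    simp only [hC, Finset.mem_filter, Finset.mem_product, Finset.mem_powersetCard]
    refine ⟨⟨?_, ?_, ?_⟩, ?_⟩
    · simp [hS, SJ]
    · intro x hx
      simp only [Finset.mem_insert, Finset.mem_singleton] at hx
      rcases hx with rfl|rfl <;> simp [hS, SJ]
    · rw [Finset.card_insert_of_notMem (by simp), Finset.card_singleton]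
    · simp
  obtain ⟨I, hIC, hImax⟩ := Finset.exists_max_image C P hCne
  simp only [hC, Finset.mem_filter, Finset.mem_product, Finset.mem_powersetCard] at hIC
  obtain ⟨⟨htS, hN2⟩, htN⟩ := hIC
  obtain ⟨a, b, hab, hNab⟩ := Finset.card_eq_two.mp hN2.2
  have haS : a ∈ S := hN2.1 (by rw [hNab]; simp)
  have hbS : b ∈ S := hN2.1 (by rw [hNab]; simp)
  have hta : I.1 ≠ a := by intro h; apply htN; rw [hNab, h]; simp
  have htb : I.1 ≠ b := by intro h; apply htN; rw [hNab, h]; simp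
  -- find z
  have h1 : ({I.1, a, b} : Finset ℕ).card ≤ 3 := by
    apply le_trans (Finset.card_insert_le _ _)
    have := Finset.card_insert_le a ({b} : Finset ℕ)
    simp at this ⊢
    omega
  have h2 : S.card = 4 := by
    simp only [hS, SJ]
    rw [Finset.card_insert_of_notMem (by simp),
      Finset.card_insert_of_notMem (by simp),
      Finset.card_insert_of_notMem (by simp), Finset.card_singleton]
  have hnsub : ¬ (S ⊆ ({I.1, a, b} : Finset ℕ)) := by
    intro h
    have := Finset.card_le_card h
    omega
  obtain ⟨z, hzS, hznot⟩ := Finset.not_subset.mp hnsub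
  simp only [Finset.mem_insert, Finset.mem_singleton] at hznot
  push_neg at hznot
  obtain ⟨hzt', hza', hzb'⟩ := hznot
  have htz : I.1 ≠ z := Ne.symm hzt'
  have haz : a ≠ z := Ne.symm hza'
  have hbz : b ≠ z := Ne.symm hzb'
  refine ⟨⟨I.1, a, b, z, htS, haS, hbS, hzS, hta, htb, htz, hab, haz, hbz, ?_⟩⟩
  have hpair : ∀ u v w : ℕ, u ∈ S → v ∈ S → w ∈ S → u ≠ v → u ≠ w → v ≠ w →
      ((u, ({v,w} : Finset ℕ)) : GItem) ∈ C := by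
    intro u v w hu hv hw huv huw hvw
    simp only [hC, Finset.mem_filter, Finset.mem_product, Finset.mem_powersetCard]
    refine ⟨⟨hu, ?_, ?_⟩, ?_⟩
    · intro x hx
      simp only [Finset.mem_insert, Finset.mem_singleton] at hx
      rcases hx with rfl|rfl <;> assumption
    · rw [Finset.card_insert_of_notMem (by simp [hvw]), Finset.card_singleton]
    · simp [huv, huw]
  intro s x hx hxne
  have hxC : x ∈ C := by
    have htab : ((I.1, ({a,b}:Finset ℕ)) : GItem) ∈ C := by
      exact hpair I.1 a b htS haS hbS hta htb hab
    cases s <;> simp only [vset, Finset.mem_insert, Finset.mem_singleton] at hx <;>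
      rcases hx with rfl|rfl|rfl|rfl <;>
      first
        | exact htab
        | exact hpair _ _ _ haS htS hbS (Ne.symm hta) hab htb
        | exact hpair _ _ _ hbS htS haS (Ne.symm htb) (Ne.symm hab) hta
        | exact hpair _ _ _ haS htS hzS (Ne.symm hta) haz htz
        | exact hpair _ _ _ hbS htS hzS (Ne.symm htb) hbz htz
        | exact hpair _ _ _ hzS haS hbS hza' hzb' hab
  have hle : P x ≤ P I := hImax x hxC
  have hIeq : I = ((I.1, ({a,b} : Finset ℕ)) : GItem) := by
    have : I = (I.1, I.2) := rfl
    rw [this, hNab]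
  rw [← hIeq]
  rcases lt_or_eq_of_le hle with h|h
  · exact h
  · exfalso; apply hxne; rw [hIeq] at h ⊢; exact hP h


lemma SJ_bounds {j x : ℕ} (h : x ∈ SJ j) : 4*j ≤ x ∧ x ≤ 4*j+3 := by
  simp only [SJ, Finset.mem_insert, Finset.mem_singleton] at h
  rcases h with rfl|rfl|rfl|rfl <;> omega

section Global

variable (P : GItem → ℝ) (hP : Function.Injective P)

noncomputable def gs (j : ℕ) : GSpec P j := (gspec_exists P hP j).some

noncomputable def gvar (j : ℕ) (s : Bool) : Finset GItem :=
  vset (gs P hP j).t (gs P hP j).a (gs P hP j).b (gs P hP j).z s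

noncomputable def tI (j : ℕ) : GItem :=
  ((gs P hP j).t, ({(gs P hP j).a, (gs P hP j).b} : Finset ℕ))

lemma tI_mem (j : ℕ) (s : Bool) : tI P hP j ∈ gvar P hP j s := vset_top_mem s

lemma gvar_le (j : ℕ) (s : Bool) : ∀ x ∈ gvar P hP j s, P x ≤ P (tI P hP j) := by
  intro x hx
  by_cases hx2 : x = tI P hP j
  · rw [hx2]
  · exact le_of_lt ((gs P hP j).topmax s x hx hx2)

lemma gvar_lt (j : ℕ) (s : Bool) : ∀ x ∈ gvar P hP j s, x ≠ tI P hP j → P x < P (tI P hP j) :=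
  (gs P hP j).topmax s

lemma gvar_names (j : ℕ) (s : Bool) : ∀ x ∈ gvar P hP j s, x.1 ∈ SJ j ∧ x.2 ⊆ SJ j := by
  intro x hx
  have h4 : ({(gs P hP j).t, (gs P hP j).a, (gs P hP j).b, (gs P hP j).z} : Finset ℕ) ⊆ SJ j := by
    intro y hy
    simp only [Finset.mem_insert, Finset.mem_singleton] at hy
    rcases hy with rfl|rfl|rfl|rfl
    exacts [(gs P hP j).ht, (gs P hP j).ha, (gs P hP j).hb, (gs P hP j).hz]
  obtain ⟨h1, h2⟩ := vset_names s x hx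
  exact ⟨h4 h1, h2.trans h4⟩

noncomputable def allItems (m : ℕ) (σ : ℕ → Bool) : Finset GItem :=
  (Finset.range m).biUnion fun j => gvar P hP j (σ j)

lemma mem_allItems {m : ℕ} {σ : ℕ → Bool} {x : GItem} :
    x ∈ allItems P hP m σ ↔ ∃ j < m, x ∈ gvar P hP j (σ j) := by
  simp [allItems, Finset.mem_biUnion, Finset.mem_range]

lemma gadget_eq_of_fst {j j' : ℕ} {s s' : Bool} {x y : GItem}
    (hx : x ∈ gvar P hP j s) (hy : y ∈ gvar P hP j' s') (hxy : x.1 = y.1) : j = j' := by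
  have h1 := (gvar_names P hP j s x hx).1
  have h2 := (gvar_names P hP j' s' y hy).1
  rw [hxy] at h1
  have b1 := SJ_bounds h1
  have b2 := SJ_bounds h2
  omega

lemma allItems_fst_inj {m : ℕ} {σ : ℕ → Bool} :
    ∀ x ∈ allItems P hP m σ, ∀ y ∈ allItems P hP m σ, x.1 = y.1 → x = y := by
  intro x hx y hy hxy
  obtain ⟨j, hj, hxj⟩ := (mem_allItems P hP).mp hx
  obtain ⟨j', hj', hyj⟩ := (mem_allItems P hP).mp hy
  obtain rfl := gadget_eq_of_fst P hP hxj hyj hxy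
  exact vset_fst_inj (gs P hP j).hta (gs P hP j).htb (gs P hP j).htz
    (gs P hP j).hab (gs P hP j).haz (gs P hP j).hbz (σ j) x hxj y hyj hxy

-- sorting
def relP : GItem → GItem → Prop := fun u v => P v ≤ P u

instance : IsTrans GItem (relP P) := ⟨fun _ _ _ h1 h2 => le_trans h2 h1⟩
instance : IsTotal GItem (relP P) := ⟨fun u v => (le_total (P v) (P u)).elim Or.inl Or.inr⟩
noncomputable instance : DecidableRel (relP P) := fun _ _ => Classical.dec _

def antisymmP : IsAntisymm GItem (relP P) := ⟨fun u v h1 h2 => hP (le_antisymm h2 h1)⟩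

noncomputable def lSort (s : Finset GItem) : List GItem :=
  haveI := antisymmP P hP
  s.sort (relP P)

lemma mem_lSort {s : Finset GItem} {x : GItem} : x ∈ lSort P hP s ↔ x ∈ s := by
  haveI := antisymmP P hP
  exact Finset.mem_sort (relP P)

lemma lSort_nodup (s : Finset GItem) : (lSort P hP s).Nodup := by
  haveI := antisymmP P hP
  exact Finset.sort_nodup s (relP P)

lemma lSort_sorted (s : Finset GItem) : List.Pairwise (relP P) (lSort P hP s) := by
  haveI := antisymmP P hP
  exact Finset.pairwise_sort s (relP P)

lemma lSort_length (s : Finset GItem) : (lSort P hP s).length = s.card := by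
  haveI := antisymmP P hP
  exact Finset.length_sort (relP P)

lemma lSort_pairwise (s : Finset GItem) :
    (lSort P hP s).Pairwise (fun u v => P v < P u) := by
  have h1 := (lSort_sorted P hP s).and (lSort_nodup P hP s)
  exact h1.imp fun {u v} h => lt_of_le_of_ne h.1 fun hc => h.2 (hP hc.symm)

end Global



section TakeLemma

variable (P : GItem → ℝ) (hP : Function.Injective P)

-- generic take lemma
lemma take_mem_iff {l : List GItem} (h : l.Pairwise (fun u v => P v < P u))
    {k : ℕ} (hk : k < l.length) {y : GItem} :
    y ∈ l.take k ↔ y ∈ l ∧ P l[k] < P y := by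
  have hsplit : l.take k ++ l.drop k = l := List.take_append_drop k l
  have hdrop : l.drop k = l[k] :: l.drop (k+1) := List.drop_eq_getElem_cons hk
  constructor
  · intro hy
    have hyl : y ∈ l := by
      rw [← hsplit]; exact List.mem_append_left _ hy
    have hpw : l.Pairwise (fun u v => P v < P u) := h
    rw [← hsplit] at hpw
    rw [List.pairwise_append] at hpw
    have := hpw.2.2 y hy l[k] (by rw [hdrop]; exact List.mem_cons_self)
    exact ⟨hyl, this⟩
  · rintro ⟨hyl, hylt⟩
    rw [← hsplit] at hyl
    rcases List.mem_append.mp hyl with h1 | h2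
    · exact h1
    · exfalso
      rw [hdrop] at h2
      rcases List.mem_cons.mp h2 with rfl | h3
      · exact lt_irrefl _ hylt
      · have hpd : (l.drop k).Pairwise (fun u v => P v < P u) :=
          h.sublist (List.drop_sublist k l)
        rw [hdrop, List.pairwise_cons] at hpd
        exact absurd hylt (not_lt_of_gt (hpd.1 y h3))
  
end TakeLemma


section Machinery

variable (P : GItem → ℝ) (hP : Function.Injective P)

lemma lSort_take (s : Finset GItem) {k : ℕ} (hk : k < (lSort P hP s).length) :
    (lSort P hP s).take k
      = lSort P hP (s.filter fun y => P ((lSort P hP s).get ⟨k, hk⟩) < P y) := by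
  haveI := antisymmP P hP
  have hpl : (lSort P hP s).Pairwise (fun u v => P v < P u) := lSort_pairwise P hP s
  have h1 : List.Pairwise (relP P) ((lSort P hP s).take k) :=
    (lSort_sorted P hP s).sublist (List.take_sublist k _)
  have h2 : ((lSort P hP s).take k).Nodup :=
    (lSort_nodup P hP s).sublist (List.take_sublist k _)
  have h3 : List.Pairwise (relP P)
      (lSort P hP (s.filter fun y => P ((lSort P hP s).get ⟨k, hk⟩) < P y)) :=
    lSort_sorted P hP _
  apply List.Perm.eq_of_pairwise' h1 h3 ?_
  apply List.perm_of_nodup_nodup_toFinset_eq h2 (lSort_nodup P hP _)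
  ext y
  simp only [List.mem_toFinset]
  simp only [take_mem_iff P hpl hk, List.get_eq_getElem, mem_lSort P hP, Finset.mem_filter]

lemma consistent_lSort (m : ℕ) (σ : ℕ → Bool) :
    ConsistentInput (lSort P hP (allItems P hP m σ)) := by
  refine ⟨?_, ?_, ?_, ?_⟩
  · apply List.Nodup.map_on _ (lSort_nodup P hP _)
    intro x hx y hy hxy
    exact allItems_fst_inj P hP x ((mem_lSort P hP).mp hx) y ((mem_lSort P hP).mp hy) hxy
  · intro p hp
    obtain ⟨j, hj, hpj⟩ := (mem_allItems P hP).mp ((mem_lSort P hP).mp hp)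
    exact vset_no_self (gs P hP j).hta (gs P hP j).htb (gs P hP j).htz
      (gs P hP j).hab (gs P hP j).haz (gs P hP j).hbz (σ j) p hpj
  · intro p hp q hq
    obtain ⟨j, hj, hpj⟩ := (mem_allItems P hP).mp ((mem_lSort P hP).mp hp)
    obtain ⟨j', hj', hqj⟩ := (mem_allItems P hP).mp ((mem_lSort P hP).mp hq)
    by_cases hjj : j = j'
    · subst hjj
      exact vset_symm (gs P hP j).hta (gs P hP j).htb (gs P hP j).htz
        (gs P hP j).hab (gs P hP j).haz (gs P hP j).hbz (σ j) p hpj q hqj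
    · have hp1 := (gvar_names P hP j _ p hpj).1
      have hp2 := (gvar_names P hP j _ p hpj).2
      have hq1 := (gvar_names P hP j' _ q hqj).1
      have hq2 := (gvar_names P hP j' _ q hqj).2
      constructor <;> intro h
      · exfalso
        have b1 := SJ_bounds hp1
        have b2 := SJ_bounds (hq2 h)
        omega
      · exfalso
        have b1 := SJ_bounds hq1
        have b2 := SJ_bounds (hp2 h)
        omega
  · intro p hp v hv
    obtain ⟨j, hj, hpj⟩ := (mem_allItems P hP).mp ((mem_lSort P hP).mp hp)
    obtain ⟨q, hq, hq1⟩ := vset_closure (σ j) p hpj v hv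
    exact ⟨q, (mem_lSort P hP).mpr ((mem_allItems P hP).mpr ⟨j, hj, hq⟩), hq1⟩

lemma tI_mem_allItems {m : ℕ} {σ : ℕ → Bool} {i : ℕ} (hi : i < m) :
    tI P hP i ∈ allItems P hP m σ :=
  (mem_allItems P hP).mpr ⟨i, hi, tI_mem P hP i (σ i)⟩

lemma tI_inj {i j : ℕ} (h : tI P hP i = tI P hP j) : i = j := by
  have h1 : (tI P hP i).1 ∈ SJ i := (gs P hP i).ht
  have h2 : (tI P hP j).1 ∈ SJ j := (gs P hP j).ht
  rw [h] at h1
  have b1 := SJ_bounds h1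
  have b2 := SJ_bounds h2
  omega

lemma onTriangle_top (m : ℕ) (σ : ℕ → Bool) {i : ℕ} (hi : i < m) :
    OnTriangle (lSort P hP (allItems P hP m σ)) (tI P hP i) ↔ σ i = true := by
  set G := gs P hP i with hG
  have htI : tI P hP i = ((G.t, ({G.a, G.b} : Finset ℕ)) : GItem) := rfl
  constructor
  · rintro ⟨u, hu, w, hw, huw, q, hql, hq1, hq2⟩
    by_contra hσ
    have hσf : σ i = false := by
      cases hσ2 : σ i
      · rfl
      · exact absurd hσ2 hσ
    obtain ⟨j, hj, hqj⟩ := (mem_allItems P hP).mp ((mem_lSort P hP).mp hql)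
    rw [htI] at hu hw
    simp only [Finset.mem_insert, Finset.mem_singleton] at hu hw
    have hqSJ : q.1 ∈ SJ j := (gvar_names P hP j _ q hqj).1
    have huSJ : q.1 ∈ SJ i := by
      rw [hq1]
      rcases hu with rfl|rfl
      · exact G.ha
      · exact G.hb
    have hji : j = i := by
      have b1 := SJ_bounds hqSJ
      have b2 := SJ_bounds huSJ
      omega
    subst hji
    rw [hσf] at hqj
    have hqvar : q ∈ vset G.t G.a G.b G.z false := hqj
    rcases hu with hu|hu
    · have hqeq : q = ((G.a, ({G.t, G.z} : Finset ℕ)) : GItem) := by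
        apply vset_fst_inj G.hta G.htb G.htz G.hab G.haz G.hbz false q hqvar _
          (by simp [vset]) (by rw [hq1, hu])
      rw [hqeq] at hq2
      simp only [Finset.mem_insert, Finset.mem_singleton] at hq2
      rcases hw with rfl|rfl
      · exact huw (hu.symm ▸ rfl)
      · rcases hq2 with h|h
        · exact G.htb h.symm
        · exact G.hbz (h ▸ rfl)
    · have hqeq : q = ((G.b, ({G.t, G.z} : Finset ℕ)) : GItem) := by
        apply vset_fst_inj G.hta G.htb G.htz G.hab G.haz G.hbz false q hqvar _
          (by simp [vset]) (by rw [hq1, hu])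
      rw [hqeq] at hq2
      simp only [Finset.mem_insert, Finset.mem_singleton] at hq2
      rcases hw with rfl|rfl
      · rcases hq2 with h|h
        · exact G.hta h.symm
        · exact G.haz (h ▸ rfl)
      · exact huw (hu.symm ▸ rfl)
  · intro hσ
    refine ⟨G.a, by rw [htI]; simp, G.b, by rw [htI]; simp, G.hab,
      ((G.a, ({G.t, G.b} : Finset ℕ)) : GItem), ?_, rfl, by simp⟩
    apply (mem_lSort P hP).mpr
    apply (mem_allItems P hP).mpr
    refine ⟨i, hi, ?_⟩
    rw [hσ]
    simp [gvar, vset, hG]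

lemma filter_allItems_congr (m : ℕ) (σ τ : ℕ → Bool) (c : ℝ)
    (hagree : ∀ j < m, c < P (tI P hP j) → σ j = τ j) :
    (allItems P hP m σ).filter (fun y => c < P y)
      = (allItems P hP m τ).filter (fun y => c < P y) := by
  rw [allItems, allItems, Finset.filter_biUnion, Finset.filter_biUnion]
  apply Finset.biUnion_congr rfl
  intro j hj
  rcases lt_or_ge c (P (tI P hP j)) with h | h
  · rw [hagree j (Finset.mem_range.mp hj) h]
  · rw [Finset.filter_false_of_mem, Finset.filter_false_of_mem]
    · intro x hx
      push_neg
      exact le_trans (gvar_le P hP j (τ j) x hx) h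
    · intro x hx
      push_neg
      exact le_trans (gvar_le P hP j (σ j) x hx) h

lemma vset_card_le (t a b z : ℕ) (s : Bool) : (vset t a b z s).card ≤ 4 := by
  cases s
  · refine le_trans (Finset.card_insert_le _ _) (Nat.succ_le_succ ?_)
    refine le_trans (Finset.card_insert_le _ _) (Nat.succ_le_succ ?_)
    refine le_trans (Finset.card_insert_le _ _) (Nat.succ_le_succ ?_)
    simp
  · refine le_trans (Finset.card_insert_le _ _) (Nat.succ_le_succ ?_)
    refine le_trans (Finset.card_insert_le _ _) (Nat.succ_le_succ ?_)
    refine le_trans ?_ (by omega : (1:ℕ) ≤ 2)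
    simp

lemma allItems_card_le (m : ℕ) (σ : ℕ → Bool) : (allItems P hP m σ).card ≤ 4 * m := by
  refine le_trans Finset.card_biUnion_le ?_
  refine le_trans (Finset.sum_le_sum fun j _ => vset_card_le _ _ _ _ (σ j)) ?_
  simp [Finset.sum_const, Finset.card_range, mul_comm]

end Machinery

end TFLB

open scoped Classical in
/-- For Triangle Finding, no fixed priority algorithm reading at most
`(1 − H(ε))n/8` advice bits can make fewer than `εn/4` mistakes, for any
`ε ∈ (0, 1/2]`: for all sufficiently large `m`, if `b < (1 − H(ε))m/2`, there
is a consistent input with `n ≤ 4m` items, presented in decreasing order of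
`P`, on which for every advice value at least `εm/2` (hence at least `εn/8`)
items are answered incorrectly. -/
theorem triangle_finding_priority_advice_lower_bound
    (P : GItem → ℝ) (hP : Function.Injective P)
    (ε : ℝ) (hε0 : 0 < ε) (hε1 : ε ≤ 1 / 2) (b : ℕ)
    (D : Fin (2 ^ b) → List GItem → GItem → Bool) :
    ∃ M : ℕ, ∀ m : ℕ, M ≤ m →
      (b : ℝ) < (1 - binEnt ε) * (m : ℝ) / 2 →
      ∃ l : List GItem,
        ConsistentInput l ∧
        l.Pairwise (fun u v => P v < P u) ∧
        l.length ≤ 4 * m ∧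
        ∀ a : Fin (2 ^ b),
          ε * (m : ℝ) / 2 ≤
            ((Finset.univ.filter (fun i : Fin l.length =>
              ¬((D a (l.take (i : ℕ)) (l.get i) = true) ↔
                OnTriangle l (l.get i)))).card : ℝ) := by
  classical
  refine ⟨2, fun m hm hb => ?_⟩
  have hm0 : 0 < m := by omega
  set m' : ℕ := m/2 + 1 with hm'def
  have hm'pos : 0 < m' := Nat.succ_pos _
  have hm'le : m' ≤ m := by omega
  have hm'ge : (m:ℝ)/2 ≤ (m':ℝ) := by
    have h2 : m < 2 * m' := by omega
    have : (m:ℝ) < 2 * (m':ℝ) := by exact_mod_cast h2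
    linarith
  set d : ℕ := ⌈ε * (m:ℝ) / 2⌉₊ with hd_def
  have hεm2 : (0:ℝ) < ε * (m:ℝ) / 2 := by
    have : (0:ℝ) < (m:ℝ) := by exact_mod_cast hm0
    positivity
  have hd1 : 1 ≤ d := Nat.one_le_iff_ne_zero.mpr (by
    simp only [hd_def, ne_eq, Nat.ceil_eq_zero, not_le]
    exact hεm2)
  set K : ℕ := d - 1 with hK_def
  have hKd : K + 1 = d := by omega
  have hdm : (ε * (m:ℝ) / 2 : ℝ) ≤ (d:ℝ) := Nat.le_ceil _
  have hdlt : (d:ℝ) < ε * (m:ℝ) / 2 + 1 := Nat.ceil_lt_add_one hεm2.le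
  have hKεm' : (K:ℝ) ≤ ε * (m':ℝ) := by
    have hKr : (K:ℝ) = (d:ℝ) - 1 := by
      rw [hK_def, Nat.cast_sub hd1, Nat.cast_one]
    have h3 : ε * ((m:ℝ)/2) ≤ ε * (m':ℝ) := mul_le_mul_of_nonneg_left hm'ge hε0.le
    rw [hKr]
    have : ε * (m:ℝ) / 2 = ε * ((m:ℝ)/2) := by ring
    linarith
  have h1H : (b:ℝ) < (1 - binEnt ε) * (m':ℝ) := by
    have hbpos : (0:ℝ) ≤ (b:ℝ) := Nat.cast_nonneg b
    have hmpos : (0:ℝ) < (m:ℝ) := by exact_mod_cast hm0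
    have hH : 0 < 1 - binEnt ε := by
      by_contra hcon
      push_neg at hcon
      have : (1 - binEnt ε) * (m:ℝ) / 2 ≤ 0 := by
        apply div_nonpos_of_nonpos_of_nonneg _ (by norm_num)
        exact mul_nonpos_of_nonpos_of_nonneg hcon hmpos.le
      linarith
    calc (b:ℝ) < (1 - binEnt ε) * (m:ℝ) / 2 := hb
      _ = (1 - binEnt ε) * ((m:ℝ)/2) := by ring
      _ ≤ (1 - binEnt ε) * (m':ℝ) := mul_le_mul_of_nonneg_left hm'ge hH.le
  -- set up the online prediction functions
  set bar : (Fin m' → Bool) → (ℕ → Bool) :=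
    fun σ n => if h : n < m' then σ ⟨n, h⟩ else false with hbar_def
  set F : Fin (2^b) → Fin m' → (Fin m' → Bool) → Bool := fun a i σ =>
    D a (TFLB.lSort P hP ((TFLB.allItems P hP m' (bar σ)).filter
      fun y => P (TFLB.tI P hP (i:ℕ)) < P y)) (TFLB.tI P hP (i:ℕ)) with hF_def
  set ρ : Fin m' → ℝ := fun i => -(P (TFLB.tI P hP (i:ℕ))) with hρ_def
  have hρinj : Function.Injective ρ := by
    intro i j hij
    simp only [hρ_def, neg_inj] at hij
    exact Fin.ext (TFLB.tI_inj P hP (hP hij))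
  have hFdep : ∀ a i σ τ, (∀ j, ρ j < ρ i → σ j = τ j) → F a i σ = F a i τ := by
    intro a i σ τ hagree
    have hfeq : (TFLB.allItems P hP m' (bar σ)).filter
        (fun y => P (TFLB.tI P hP (i:ℕ)) < P y)
        = (TFLB.allItems P hP m' (bar τ)).filter
        (fun y => P (TFLB.tI P hP (i:ℕ)) < P y) := by
      apply TFLB.filter_allItems_congr P hP m' _ _ _
      intro j hj hlt
      have := hagree ⟨j, hj⟩ (by simp only [hρ_def]; exact neg_lt_neg hlt)
      simp only [hbar_def, dif_pos hj]
      exact this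
    simp only [hF_def, hfeq]
  -- counting
  set Bad : Finset (Fin m' → Bool) := Finset.univ.filter
    (fun σ => ∃ a : Fin (2^b),
      (Finset.univ.filter fun i => F a i σ ≠ σ i).card ≤ K) with hBad_def
  have hBadcard : Bad.card ≤ 2^b * ∑ k ∈ Finset.range (K+1), m'.choose k := by
    have hsub : Bad ⊆ (Finset.univ : Finset (Fin (2^b))).biUnion
        (fun a => Finset.univ.filter
          (fun σ : Fin m' → Bool =>
            (Finset.univ.filter fun i => F a i σ ≠ σ i).card ≤ K)) := by
      intro σ hσ
      simp only [hBad_def, Finset.mem_filter, Finset.mem_univ, true_and] at hσ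
      obtain ⟨a, ha⟩ := hσ
      exact Finset.mem_biUnion.mpr ⟨a, Finset.mem_univ a, by
        simp only [Finset.mem_filter, Finset.mem_univ, true_and]; exact ha⟩
    refine le_trans (Finset.card_le_card hsub) ?_
    refine le_trans Finset.card_biUnion_le ?_
    have hbound : ∀ a : Fin (2^b),
        (Finset.univ.filter
          (fun σ : Fin m' → Bool =>
            (Finset.univ.filter fun i => F a i σ ≠ σ i).card ≤ K)).card
          ≤ ∑ k ∈ Finset.range (K+1), m'.choose k :=
      fun a => TFLB.online_counting ρ hρinj (F a) (hFdep a) K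
    refine le_trans (Finset.sum_le_sum fun a _ => hbound a) ?_
    simp [Finset.sum_const, Finset.card_univ]
  have hltN : 2^b * ∑ k ∈ Finset.range (K+1), m'.choose k < 2^m' := by
    have hreal := TFLB.main_count hε0 hε1 hm'pos hKεm' h1H
    have hcast : ((2^b * ∑ k ∈ Finset.range (K+1), m'.choose k : ℕ) : ℝ)
        < ((2^m' : ℕ) : ℝ) := by
      push_cast
      exact hreal
    exact_mod_cast hcast
  have hexists : ∃ σ : Fin m' → Bool, σ ∉ Bad := by
    by_contra hcon
    push_neg at hcon
    have : (Finset.univ : Finset (Fin m' → Bool)) ⊆ Bad := fun σ _ => hcon σ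
    have hcard := Finset.card_le_card this
    rw [Finset.card_univ] at hcard
    have huniv : Fintype.card (Fin m' → Bool) = 2^m' := by
      rw [Fintype.card_fun, Fintype.card_bool, Fintype.card_fin]
    rw [huniv] at hcard
    omega
  obtain ⟨σ, hσgood⟩ := hexists
  have hσall : ∀ a : Fin (2^b),
      d ≤ (Finset.univ.filter fun i => F a i σ ≠ σ i).card := by
    intro a
    by_contra hcon
    push_neg at hcon
    apply hσgood
    simp only [hBad_def, Finset.mem_filter, Finset.mem_univ, true_and]
    exact ⟨a, by omega⟩
  -- build the input
  refine ⟨TFLB.lSort P hP (TFLB.allItems P hP m' (bar σ)), ?_, ?_, ?_, ?_⟩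
  · exact TFLB.consistent_lSort P hP m' (bar σ)
  · exact TFLB.lSort_pairwise P hP _
  · rw [TFLB.lSort_length]
    calc (TFLB.allItems P hP m' (bar σ)).card ≤ 4 * m' := TFLB.allItems_card_le P hP m' (bar σ)
      _ ≤ 4 * m := by omega
  · intro a
    have hspace : ∀ i : Fin m', TFLB.tI P hP (i:ℕ) ∈ TFLB.allItems P hP m' (bar σ) :=
      fun i => TFLB.tI_mem_allItems P hP i.isLt
    have hmeml : ∀ i : Fin m', TFLB.tI P hP (i:ℕ) ∈ (TFLB.lSort P hP (TFLB.allItems P hP m' (bar σ))) :=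
      fun i => (TFLB.mem_lSort P hP).mpr (hspace i)
    choose idx hidx using fun i : Fin m' => List.mem_iff_get.mp (hmeml i)
    have key : ∀ i : Fin m', F a i σ ≠ σ i →
        idx i ∈ (Finset.univ.filter (fun p : Fin ((TFLB.lSort P hP (TFLB.allItems P hP m' (bar σ)))).length =>
          ¬((D a (((TFLB.lSort P hP (TFLB.allItems P hP m' (bar σ)))).take (p : ℕ)) (((TFLB.lSort P hP (TFLB.allItems P hP m' (bar σ)))).get p) = true) ↔
            OnTriangle (TFLB.lSort P hP (TFLB.allItems P hP m' (bar σ))) (((TFLB.lSort P hP (TFLB.allItems P hP m' (bar σ)))).get p)))) := by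
      intro i hFi
      simp only [Finset.mem_filter, Finset.mem_univ, true_and]
      have htake : ((TFLB.lSort P hP (TFLB.allItems P hP m' (bar σ)))).take ((idx i : ℕ))
          = TFLB.lSort P hP ((TFLB.allItems P hP m' (bar σ)).filter
              fun y => P (TFLB.tI P hP (i:ℕ)) < P y) := by
        have hstep := TFLB.lSort_take P hP (TFLB.allItems P hP m' (bar σ))
          (k := (idx i : ℕ)) ((idx i).isLt)
        rw [hstep]
        congr 1
        apply Finset.filter_congr
        intro y _
        have hget : ((TFLB.lSort P hP (TFLB.allItems P hP m' (bar σ)))).get ⟨(idx i : ℕ), (idx i).isLt⟩ = TFLB.tI P hP (i:ℕ) := hidx i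
        rw [hget]
      have hD : D a (((TFLB.lSort P hP (TFLB.allItems P hP m' (bar σ)))).take ((idx i : ℕ))) (((TFLB.lSort P hP (TFLB.allItems P hP m' (bar σ)))).get (idx i)) = F a i σ := by
        rw [htake, hidx i]
      have hOT : OnTriangle (TFLB.lSort P hP (TFLB.allItems P hP m' (bar σ))) (((TFLB.lSort P hP (TFLB.allItems P hP m' (bar σ)))).get (idx i)) ↔ σ i = true := by
        rw [hidx i]
        rw [TFLB.onTriangle_top P hP m' (bar σ) i.isLt]
        simp only [hbar_def, dif_pos i.isLt]
      rw [hD, hOT]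
      intro hcon
      apply hFi
      cases hσi : σ i
      · cases hFa : F a i σ
        · rfl
        · exfalso
          rw [hσi, hFa] at hcon
          simp at hcon
      · cases hFa : F a i σ
        · exfalso
          rw [hσi, hFa] at hcon
          simp at hcon
        · rfl
    have hinj : Set.InjOn idx
        ((Finset.univ.filter fun i => F a i σ ≠ σ i) : Finset (Fin m')) := by
      intro i _ j _ hij
      have : TFLB.tI P hP (i:ℕ) = TFLB.tI P hP (j:ℕ) := by
        rw [← hidx i, ← hidx j, hij]
      exact Fin.ext (TFLB.tI_inj P hP this)
    have hcard := Finset.card_le_card_of_injOn idx (fun i hi => key i (by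
      simpa only [Finset.mem_coe, Finset.mem_filter, Finset.mem_univ, true_and] using hi)) hinj
    have hfinal : d ≤ (Finset.univ.filter (fun p : Fin ((TFLB.lSort P hP (TFLB.allItems P hP m' (bar σ)))).length =>
        ¬((D a (((TFLB.lSort P hP (TFLB.allItems P hP m' (bar σ)))).take (p : ℕ)) (((TFLB.lSort P hP (TFLB.allItems P hP m' (bar σ)))).get p) = true) ↔
          OnTriangle (TFLB.lSort P hP (TFLB.allItems P hP m' (bar σ))) (((TFLB.lSort P hP (TFLB.allItems P hP m' (bar σ)))).get p)))).card :=
      le_trans (hσall a) hcard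
    calc ε * (m:ℝ) / 2 ≤ (d:ℝ) := hdm
      _ ≤ _ := by exact_mod_cast hfinal
end
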